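/- Let G, H, K be locally compact Hausdorff groupoids with open range and source maps carrying left Haar systems, let Ω be a graph from G to H and Ω' a graph from H to K. Then Ω* ∘ (Ω')* ≅ (Ω ×_H Ω')* as multiplicative functors from the category of K-Banach spaces to the category of G-Banach spaces; in particular, when Ω and Ω' are equivalences, Ind_H^G ∘ Ind_K^H = Ind_K^G. -/
import Mathlib


universe u v w x y z

/-! ## Topological groupoids, actions, equivalences -/

/-- A topological groupoid structure on a space `G` of morphisms over a space `O` of objects.
The multiplication is a total function which is only meaningful on composable pairs
(pairs `(γ, γ')` with `s γ = r γ'`). -/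
structure TopGroupoid (G : Type u) (O : Type v)
    [TopologicalSpace G] [TopologicalSpace O] where
  r : G → O
  s : G → O
  unit : O → G
  mul : G → G → G
  inv : G → G
  r_unit : ∀ x, r (unit x) = x
  s_unit : ∀ x, s (unit x) = x
  r_mul : ∀ γ γ', s γ = r γ' → r (mul γ γ') = r γ
  s_mul : ∀ γ γ', s γ = r γ' → s (mul γ γ') = s γ'
  mul_assoc : ∀ γ₁ γ₂ γ₃, s γ₁ = r γ₂ → s γ₂ = r γ₃ →
    mul (mul γ₁ γ₂) γ₃ = mul γ₁ (mul γ₂ γ₃)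
  unit_mul : ∀ γ, mul (unit (r γ)) γ = γ
  mul_unit : ∀ γ, mul γ (unit (s γ)) = γ
  r_inv : ∀ γ, r (inv γ) = s γ
  s_inv : ∀ γ, s (inv γ) = r γ
  mul_inv : ∀ γ, mul γ (inv γ) = unit (r γ)
  inv_mul : ∀ γ, mul (inv γ) γ = unit (s γ)
  continuous_r : Continuous r
  continuous_s : Continuous s
  continuous_unit : Continuous unit
  continuous_inv : Continuous inv
  continuousOn_mul : ContinuousOn (fun p : G × G => mul p.1 p.2) {p | s p.1 = r p.2}

/-- A groupoid "with open range and source maps". -/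
def TopGroupoid.OpenMaps {G : Type u} {O : Type v} [TopologicalSpace G] [TopologicalSpace O]
    (𝒢 : TopGroupoid G O) : Prop :=
  IsOpenMap 𝒢.r ∧ IsOpenMap 𝒢.s

/-- A "locally compact Hausdorff groupoid" is a topological groupoid whose total space (and
hence unit space) is locally compact Hausdorff; we record this as a property. -/
def TopGroupoid.IsLCH {G : Type u} {O : Type v} [TopologicalSpace G] [TopologicalSpace O]
    (_ : TopGroupoid G O) : Prop :=
  LocallyCompactSpace G ∧ T2Space G ∧ LocallyCompactSpace O ∧ T2Space O

/-- A continuous left action of a topological groupoid on a space `Ω` with anchor map `ρ`.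
Again the action map is total but only meaningful on composable pairs. -/
structure GLeftAction {G : Type u} {O : Type v} [TopologicalSpace G] [TopologicalSpace O]
    (𝒢 : TopGroupoid G O) (Ω : Type w) [TopologicalSpace Ω] where
  ρ : Ω → O
  act : G → Ω → Ω
  continuous_ρ : Continuous ρ
  ρ_act : ∀ γ ω, 𝒢.s γ = ρ ω → ρ (act γ ω) = 𝒢.r γ
  unit_act : ∀ ω, act (𝒢.unit (ρ ω)) ω = ω
  mul_act : ∀ γ γ' ω, 𝒢.s γ = 𝒢.r γ' → 𝒢.s γ' = ρ ω →
    act (𝒢.mul γ γ') ω = act γ (act γ' ω)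
  continuousOn_act : ContinuousOn (fun p : G × Ω => act p.1 p.2) {p | 𝒢.s p.1 = ρ p.2}

/-- A continuous right action of a topological groupoid on a space `Ω` with anchor map `σ`. -/
structure GRightAction {H : Type u} {P : Type v} [TopologicalSpace H] [TopologicalSpace P]
    (ℋ : TopGroupoid H P) (Ω : Type w) [TopologicalSpace Ω] where
  σ : Ω → P
  act : Ω → H → Ω
  continuous_σ : Continuous σ
  σ_act : ∀ ω η, σ ω = ℋ.r η → σ (act ω η) = ℋ.s η
  act_unit : ∀ ω, act ω (ℋ.unit (σ ω)) = ω
  act_mul : ∀ ω η η', σ ω = ℋ.r η → ℋ.s η = ℋ.r η' →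
    act ω (ℋ.mul η η') = act (act ω η) η'
  continuousOn_act : ContinuousOn (fun p : Ω × H => act p.1 p.2) {p | σ p.1 = ℋ.r p.2}

namespace GLeftAction

variable {G : Type u} {O : Type v} [TopologicalSpace G] [TopologicalSpace O]
variable {𝒢 : TopGroupoid G O} {Ω : Type w} [TopologicalSpace Ω]

/-- Freeness of a left groupoid action. -/
def Free (a : GLeftAction 𝒢 Ω) : Prop :=
  ∀ γ ω, 𝒢.s γ = a.ρ ω → a.act γ ω = ω → γ = 𝒢.unit (a.ρ ω)

/-- Properness of a left groupoid action: the map `(γ, ω) ↦ (γ·ω, ω)` on the space of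
composable pairs is a proper map. -/
def Proper (a : GLeftAction 𝒢 Ω) : Prop :=
  IsProperMap (fun p : {p : G × Ω // 𝒢.s p.1 = a.ρ p.2} =>
    ((a.act p.1.1 p.1.2, p.1.2) : Ω × Ω))

end GLeftAction

namespace GRightAction

variable {H : Type u} {P : Type v} [TopologicalSpace H] [TopologicalSpace P]
variable {ℋ : TopGroupoid H P} {Ω : Type w} [TopologicalSpace Ω]

/-- Freeness of a right groupoid action. -/
def Free (a : GRightAction ℋ Ω) : Prop :=
  ∀ ω η, a.σ ω = ℋ.r η → a.act ω η = ω → η = ℋ.unit (a.σ ω)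

/-- Properness of a right groupoid action. -/
def Proper (a : GRightAction ℋ Ω) : Prop :=
  IsProperMap (fun p : {p : Ω × H // a.σ p.1 = ℋ.r p.2} =>
    ((a.act p.1.1 p.1.2, p.1.1) : Ω × Ω))

end GRightAction

/-- A `𝒢`-`ℋ`-bimodule: commuting continuous left `𝒢`- and right `ℋ`-actions on `Ω`. -/
structure GBimodule {G : Type u} {O : Type v} {H : Type w} {P : Type x}
    [TopologicalSpace G] [TopologicalSpace O] [TopologicalSpace H] [TopologicalSpace P]
    (𝒢 : TopGroupoid G O) (ℋ : TopGroupoid H P) (Ω : Type y) [TopologicalSpace Ω] where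
  left : GLeftAction 𝒢 Ω
  right : GRightAction ℋ Ω
  σ_actl : ∀ γ ω, 𝒢.s γ = left.ρ ω → right.σ (left.act γ ω) = right.σ ω
  ρ_actr : ∀ ω η, right.σ ω = ℋ.r η → left.ρ (right.act ω η) = left.ρ ω
  commute : ∀ γ ω η, 𝒢.s γ = left.ρ ω → right.σ ω = ℋ.r η →
    left.act γ (right.act ω η) = right.act (left.act γ ω) η

/-- A graph ("generalised morphism datum") from `𝒢` to `ℋ`: a bimodule whose left anchor map
`ρ` is a principal fibration with structure groupoid `ℋ`. -/
structure IsGraph {G : Type u} {O : Type v} {H : Type w} {P : Type x}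
    [TopologicalSpace G] [TopologicalSpace O] [TopologicalSpace H] [TopologicalSpace P]
    {𝒢 : TopGroupoid G O} {ℋ : TopGroupoid H P} {Ω : Type y} [TopologicalSpace Ω]
    (M : GBimodule 𝒢 ℋ Ω) : Prop where
  free_right : M.right.Free
  proper_right : M.right.Proper
  ρ_open : IsOpenMap M.left.ρ
  ρ_surj : Function.Surjective M.left.ρ
  fibre_trans : ∀ ω ω', M.left.ρ ω = M.left.ρ ω' →
    ∃ η, M.right.σ ω = ℋ.r η ∧ M.right.act ω η = ω'

/-- A `𝒢`-`ℋ`-equivalence bimodule. -/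
structure IsEquivalence {G : Type u} {O : Type v} {H : Type w} {P : Type x}
    [TopologicalSpace G] [TopologicalSpace O] [TopologicalSpace H] [TopologicalSpace P]
    {𝒢 : TopGroupoid G O} {ℋ : TopGroupoid H P} {Ω : Type y} [TopologicalSpace Ω]
    (M : GBimodule 𝒢 ℋ Ω) : Prop where
  free_left : M.left.Free
  proper_left : M.left.Proper
  free_right : M.right.Free
  proper_right : M.right.Proper
  ρ_open : IsOpenMap M.left.ρ
  ρ_surj : Function.Surjective M.left.ρ
  /-- the fibres of `ρ` are exactly the `ℋ`-orbits, i.e. `ρ` induces a homeomorphism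
  `Ω/ℋ ≅ 𝒢⁽⁰⁾` (openness + surjectivity + this condition). -/
  ρ_fibres : ∀ ω ω', M.left.ρ ω = M.left.ρ ω' ↔
    ∃ η, M.right.σ ω = ℋ.r η ∧ M.right.act ω η = ω'
  σ_open : IsOpenMap M.right.σ
  σ_surj : Function.Surjective M.right.σ
  /-- the fibres of `σ` are exactly the `𝒢`-orbits, i.e. `σ` induces a homeomorphism
  `𝒢\Ω ≅ ℋ⁽⁰⁾`. -/
  σ_fibres : ∀ ω ω', M.right.σ ω = M.right.σ ω' ↔
    ∃ γ, 𝒢.s γ = M.left.ρ ω ∧ M.left.act γ ω = ω'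

/-- A strict morphism of topological groupoids (a continuous functor). -/
structure StrictMorphism {G : Type u} {O : Type v} {H : Type w} {P : Type x}
    [TopologicalSpace G] [TopologicalSpace O] [TopologicalSpace H] [TopologicalSpace P]
    (𝒢 : TopGroupoid G O) (ℋ : TopGroupoid H P) where
  toFun : G → H
  obj : O → P
  continuous_toFun : Continuous toFun
  continuous_obj : Continuous obj
  map_unit : ∀ x, toFun (𝒢.unit x) = ℋ.unit (obj x)
  map_r : ∀ γ, ℋ.r (toFun γ) = obj (𝒢.r γ)
  map_s : ∀ γ, ℋ.s (toFun γ) = obj (𝒢.s γ)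
  map_mul : ∀ γ γ', 𝒢.s γ = 𝒢.r γ' → toFun (𝒢.mul γ γ') = ℋ.mul (toFun γ) (toFun γ')

/-- The carrier of the pullback groupoid `p*(𝒢)` along `p : Y → 𝒢⁽⁰⁾`. -/
def PullbackCarrier {G : Type u} {O : Type v} [TopologicalSpace G] [TopologicalSpace O]
    (𝒢 : TopGroupoid G O) {Y : Type w} [TopologicalSpace Y] (p : Y → O) : Type (max u w) :=
  {t : Y × G × Y // p t.1 = 𝒢.r t.2.1 ∧ 𝒢.s t.2.1 = p t.2.2}

instance {G : Type u} {O : Type v} [TopologicalSpace G] [TopologicalSpace O]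
    (𝒢 : TopGroupoid G O) {Y : Type w} [TopologicalSpace Y] (p : Y → O) :
    TopologicalSpace (PullbackCarrier 𝒢 p) :=
  instTopologicalSpaceSubtype

/-- A topological groupoid structure on `PullbackCarrier 𝒢 p` realises the pullback groupoid
`p*(𝒢)` if its structure maps are the canonical ones. -/
structure IsPullbackGroupoid {G : Type u} {O : Type v} [TopologicalSpace G] [TopologicalSpace O]
    (𝒢 : TopGroupoid G O) {Y : Type w} [TopologicalSpace Y] (p : Y → O)
    (PB : TopGroupoid (PullbackCarrier 𝒢 p) Y) : Prop where
  r_eq : ∀ t : PullbackCarrier 𝒢 p, PB.r t = t.1.1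
  s_eq : ∀ t : PullbackCarrier 𝒢 p, PB.s t = t.1.2.2
  unit_eq : ∀ y : Y, (PB.unit y).1 = (y, 𝒢.unit (p y), y)
  mul_eq : ∀ t t' : PullbackCarrier 𝒢 p, t.1.2.2 = t'.1.1 →
    (PB.mul t t').1 = (t.1.1, 𝒢.mul t.1.2.1 t'.1.2.1, t'.1.2.2)
  inv_eq : ∀ t : PullbackCarrier 𝒢 p, (PB.inv t).1 = (t.1.2.2, 𝒢.inv t.1.2.1, t.1.1)

/-! ## Upper semi-continuous fields of Banach spaces, Banach algebras and Banach pairs -/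

/-- An upper semi-continuous field of Banach spaces over `X`: a family of (complex) Banach
spaces `(E x)_{x ∈ X}` together with a space of sections `Γ` satisfying Lafforgue's
conditions (C1)–(C4). -/
structure USCField (X : Type u) [TopologicalSpace X] (E : X → Type v)
    [∀ x, NormedAddCommGroup (E x)] [∀ x, NormedSpace ℂ (E x)]
    [∀ x, CompleteSpace (E x)] : Type (max u v) where
  Γ : Set (∀ x, E x)
  /-- (C1) `Γ` is a linear subspace (zero) -/
  zero_mem : (fun x => (0 : E x)) ∈ Γ
  /-- (C1) `Γ` is a linear subspace (addition) -/
  add_mem : ∀ {ξ η}, ξ ∈ Γ → η ∈ Γ → (fun x => ξ x + η x) ∈ Γ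
  /-- (C1) `Γ` is a linear subspace (scalar multiplication) -/
  smul_mem : ∀ (c : ℂ) {ξ}, ξ ∈ Γ → (fun x => c • ξ x) ∈ Γ
  /-- (C2) evaluation has dense image in every fibre -/
  dense_eval : ∀ (x : X) (e : E x) (ε : ℝ), 0 < ε → ∃ ξ ∈ Γ, ‖ξ x - e‖ < ε
  /-- (C3) norms of sections are upper semi-continuous -/
  usc_norm : ∀ ξ ∈ Γ, UpperSemicontinuous fun x => ‖ξ x‖
  /-- (C4) a selection that is locally uniformly approximable by sections is a section -/
  locally_approx_mem : ∀ ξ : ∀ x, E x,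
      (∀ (x₀ : X) (ε : ℝ), 0 < ε → ∃ γ ∈ Γ, ∃ U ∈ nhds x₀, ∀ x ∈ U, ‖ξ x - γ x‖ ≤ ε) →
      ξ ∈ Γ

namespace USCField

variable {X : Type u} [TopologicalSpace X] {E : X → Type v}
  [∀ x, NormedAddCommGroup (E x)] [∀ x, NormedSpace ℂ (E x)] [∀ x, CompleteSpace (E x)]

/-- The sections vanishing at infinity, `Γ₀(X, E)`. -/
def Γ₀ (F : USCField X E) : Set (∀ x, E x) :=
  {ξ | ξ ∈ F.Γ ∧ ∀ ε : ℝ, 0 < ε → ∃ K : Set X, IsCompact K ∧ ∀ x ∉ K, ‖ξ x‖ ≤ ε}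

/-- The sections with compact support, `Γ_c(X, E)`. -/
def Γc (F : USCField X E) : Set (∀ x, E x) :=
  {ξ | ξ ∈ F.Γ ∧ ∃ K : Set X, IsCompact K ∧ ∀ x ∉ K, ξ x = 0}

end USCField

/-- The set of sections of the pullback field `p*E` along `p : Y → X`: the selections
`y ↦ ξ y ∈ E (p y)` which are locally uniformly approximable by sections of the form
`γ ∘ p` with `γ ∈ Γ`. -/
def pbSec {X : Type u} {Y : Type w} [TopologicalSpace Y] (p : Y → X)
    (E : X → Type v) [∀ x, NormedAddCommGroup (E x)] (Γ : Set (∀ x, E x)) :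
    Set (∀ y, E (p y)) :=
  {ξ | ∀ (y₀ : Y) (ε : ℝ), 0 < ε → ∃ γ ∈ Γ, ∃ V ∈ nhds y₀, ∀ y ∈ V, ‖ξ y - γ (p y)‖ ≤ ε}

/-- The sections of the pullback field which vanish at infinity. -/
def pbSec₀ {X : Type u} {Y : Type w} [TopologicalSpace Y] (p : Y → X)
    (E : X → Type v) [∀ x, NormedAddCommGroup (E x)] (Γ : Set (∀ x, E x)) :
    Set (∀ y, E (p y)) :=
  {ξ | ξ ∈ pbSec p E Γ ∧ ∀ ε : ℝ, 0 < ε → ∃ K : Set Y, IsCompact K ∧ ∀ y ∉ K, ‖ξ y‖ ≤ ε}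

/-- A bundled u.s.c. field of Banach spaces over `X`. -/
structure BanachSpaceFieldB (X : Type u) [TopologicalSpace X] : Type (max u (v + 1)) where
  E : X → Type v
  [instN : ∀ x, NormedAddCommGroup (E x)]
  [instS : ∀ x, NormedSpace ℂ (E x)]
  [instC : ∀ x, CompleteSpace (E x)]
  F : USCField X E

attribute [instance] BanachSpaceFieldB.instN BanachSpaceFieldB.instS BanachSpaceFieldB.instC

/-- A bundled u.s.c. field of Banach algebras over `X`: a u.s.c. field of Banach spaces whose
fibres are (complex, possibly non-unital) Banach algebras, with multiplication a contractive
continuous field of bilinear maps (in particular sections are closed under the fibrewise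
product). -/
structure BanachAlgFieldB (X : Type u) [TopologicalSpace X] : Type (max u (v + 1)) where
  A : X → Type v
  [instR : ∀ x, NonUnitalNormedRing (A x)]
  [instS : ∀ x, NormedSpace ℂ (A x)]
  [instM : ∀ x, SMulCommClass ℂ (A x) (A x)]
  [instM' : ∀ x, IsScalarTower ℂ (A x) (A x)]
  [instC : ∀ x, CompleteSpace (A x)]
  F : USCField X A
  mul_mem : ∀ {ξ η}, ξ ∈ F.Γ → η ∈ F.Γ → (fun x => ξ x * η x) ∈ F.Γ

attribute [instance] BanachAlgFieldB.instR BanachAlgFieldB.instS BanachAlgFieldB.instM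
  BanachAlgFieldB.instM' BanachAlgFieldB.instC

/-- A u.s.c. field of Banach algebras is non-degenerate if in each fibre the span of products
is dense. -/
def BanachAlgFieldB.Nondegenerate {X : Type u} [TopologicalSpace X]
    (𝔅 : BanachAlgFieldB.{u, v} X) : Prop :=
  ∀ x, Dense (Submodule.span ℂ {c : 𝔅.A x | ∃ a b : 𝔅.A x, c = a * b} : Set (𝔅.A x))

/-- A bundled Banach `B`-pair over `X`: u.s.c. fields `E^<` (a left Banach `B`-module) and
`E^>` (a right Banach `B`-module) together with a contractive `B`-bilinear pairing
`⟨·,·⟩ : E^< ×_X E^> → B`. -/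
structure BanachPairB {X : Type u} [TopologicalSpace X] (𝔅 : BanachAlgFieldB.{u, v} X) :
    Type (max u (v + 1)) where
  Em : X → Type v
  Ep : X → Type v
  [instmN : ∀ x, NormedAddCommGroup (Em x)]
  [instmS : ∀ x, NormedSpace ℂ (Em x)]
  [instmC : ∀ x, CompleteSpace (Em x)]
  [instpN : ∀ x, NormedAddCommGroup (Ep x)]
  [instpS : ∀ x, NormedSpace ℂ (Ep x)]
  [instpC : ∀ x, CompleteSpace (Ep x)]
  Fm : USCField X Em
  Fp : USCField X Ep
  /-- the left action of `B` on `E^<` -/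
  lsmul : ∀ x, 𝔅.A x →L[ℂ] Em x →L[ℂ] Em x
  /-- the right action of `B` on `E^>` -/
  rsmul : ∀ x, Ep x →L[ℂ] 𝔅.A x →L[ℂ] Ep x
  /-- the pairing `⟨·,·⟩ : E^< ×_X E^> → B` -/
  pairing : ∀ x, Em x →L[ℂ] Ep x →L[ℂ] 𝔅.A x
  lsmul_mul : ∀ x (a b : 𝔅.A x) e, lsmul x (a * b) e = lsmul x a (lsmul x b e)
  rsmul_mul : ∀ x e (a b : 𝔅.A x), rsmul x (rsmul x e a) b = rsmul x e (a * b)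
  norm_lsmul : ∀ x (a : 𝔅.A x) e, ‖lsmul x a e‖ ≤ ‖a‖ * ‖e‖
  norm_rsmul : ∀ x e (a : 𝔅.A x), ‖rsmul x e a‖ ≤ ‖e‖ * ‖a‖
  norm_pairing : ∀ x e f, ‖pairing x e f‖ ≤ ‖e‖ * ‖f‖
  pairing_lsmul : ∀ x (a : 𝔅.A x) e f, pairing x (lsmul x a e) f = a * pairing x e f
  pairing_rsmul : ∀ x e f (a : 𝔅.A x), pairing x e (rsmul x f a) = pairing x e f * a
  lsmul_mem : ∀ {β ξ}, β ∈ 𝔅.F.Γ → ξ ∈ Fm.Γ → (fun x => lsmul x (β x) (ξ x)) ∈ Fm.Γ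
  rsmul_mem : ∀ {ξ β}, ξ ∈ Fp.Γ → β ∈ 𝔅.F.Γ → (fun x => rsmul x (ξ x) (β x)) ∈ Fp.Γ
  pairing_mem : ∀ {ξ η}, ξ ∈ Fm.Γ → η ∈ Fp.Γ →
    (fun x => pairing x (ξ x) (η x)) ∈ 𝔅.F.Γ

attribute [instance] BanachPairB.instmN BanachPairB.instmS BanachPairB.instmC
  BanachPairB.instpN BanachPairB.instpS BanachPairB.instpC

namespace BanachPairB

variable {X : Type u} [TopologicalSpace X] {𝔅 : BanachAlgFieldB.{u, v} X}

/-- Non-degeneracy of a Banach pair: in each fibre, `E^> B` spans a dense subspace of `E^>`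
and `B E^<` spans a dense subspace of `E^<`. -/
def Nondegenerate (P : BanachPairB 𝔅) : Prop :=
  (∀ x, Dense (Submodule.span ℂ
      {e : P.Ep x | ∃ (f : P.Ep x) (a : 𝔅.A x), e = P.rsmul x f a} : Set (P.Ep x))) ∧
  (∀ x, Dense (Submodule.span ℂ
      {e : P.Em x | ∃ (a : 𝔅.A x) (f : P.Em x), e = P.lsmul x a f} : Set (P.Em x)))

end BanachPairB

section Operators

variable {X : Type u} [TopologicalSpace X] {𝔅 : BanachAlgFieldB.{u, v} X}

/-- The fibrewise rank-one operator `|η⟩⟨ξ| : E^> → F^>`, `e ↦ η ⟨ξ, e⟩`. -/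
noncomputable def rankOneP (P Q : BanachPairB 𝔅) (x : X) (ξ : P.Em x) (η : Q.Ep x) :
    P.Ep x →L[ℂ] Q.Ep x :=
  (Q.rsmul x η).comp (P.pairing x ξ)

/-- The fibrewise rank-one operator `|η⟩⟨ξ| : F^< → E^<`, `f ↦ ⟨f, η⟩ ξ`. -/
noncomputable def rankOneM (P Q : BanachPairB 𝔅) (x : X) (ξ : P.Em x) (η : Q.Ep x) :
    Q.Em x →L[ℂ] P.Em x :=
  ((P.lsmul x).flip ξ).comp ((Q.pairing x).flip η)

variable (P Q : BanachPairB 𝔅)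

/-- A family of fibrewise operators between two Banach pairs ("a field of linear maps"):
`T^> : E^> → F^>` and `T^< : F^< → E^<`. -/
structure OpFamily (P Q : BanachPairB 𝔅) : Type (max u v) where
  Tp : ∀ x, P.Ep x →L[ℂ] Q.Ep x
  Tm : ∀ x, Q.Em x →L[ℂ] P.Em x

namespace OpFamily

/-- A continuous field of `B`-linear operators between Banach pairs: fibrewise `B`-linear,
adjointable for the pairings, mapping sections to sections and locally bounded. -/
structure IsLin {P Q : BanachPairB 𝔅} (T : OpFamily P Q) : Prop where
  map_rsmul : ∀ x e (a : 𝔅.A x), T.Tp x (P.rsmul x e a) = Q.rsmul x (T.Tp x e) a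
  map_lsmul : ∀ x (a : 𝔅.A x) f, T.Tm x (Q.lsmul x a f) = P.lsmul x a (T.Tm x f)
  adjoint : ∀ x f e, P.pairing x (T.Tm x f) e = Q.pairing x f (T.Tp x e)
  maps_sections_p : ∀ ξ ∈ P.Fp.Γ, (fun x => T.Tp x (ξ x)) ∈ Q.Fp.Γ
  maps_sections_m : ∀ ξ ∈ Q.Fm.Γ, (fun x => T.Tm x (ξ x)) ∈ P.Fm.Γ
  locally_bounded : ∀ x₀ : X, ∃ U ∈ nhds x₀, ∃ C : ℝ,
    ∀ x ∈ U, ‖T.Tp x‖ ≤ C ∧ ‖T.Tm x‖ ≤ C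

/-- Boundedness of a field of operators. -/
def IsBounded {P Q : BanachPairB 𝔅} (T : OpFamily P Q) : Prop :=
  ∃ C : ℝ, ∀ x, ‖T.Tp x‖ ≤ C ∧ ‖T.Tm x‖ ≤ C

end OpFamily

/-- A field of operators is **locally compact** if near every point it can be uniformly
approximated by finite sums of rank-one operators built from arbitrary sections. -/
def IsLocallyCompactOp {P Q : BanachPairB 𝔅} (T : OpFamily P Q) : Prop :=
  ∀ (x₀ : X) (ε : ℝ), 0 < ε → ∃ U ∈ nhds x₀, ∃ n : ℕ,
    ∃ ξ : Fin n → ∀ x, P.Em x, ∃ η : Fin n → ∀ x, Q.Ep x,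
      (∀ i, ξ i ∈ P.Fm.Γ) ∧ (∀ i, η i ∈ Q.Fp.Γ) ∧
      ∀ x ∈ U, ‖T.Tp x - ∑ i, rankOneP P Q x (ξ i x) (η i x)‖ ≤ ε ∧
               ‖T.Tm x - ∑ i, rankOneM P Q x (ξ i x) (η i x)‖ ≤ ε

/-- A field of operators is **compact** if it is a uniform (over `X`) limit of finite sums of
rank-one operators built from sections vanishing at infinity. -/
def IsCompactOp {P Q : BanachPairB 𝔅} (T : OpFamily P Q) : Prop :=
  ∀ ε : ℝ, 0 < ε → ∃ n : ℕ,
    ∃ ξ : Fin n → ∀ x, P.Em x, ∃ η : Fin n → ∀ x, Q.Ep x,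
      (∀ i, ξ i ∈ P.Fm.Γ₀) ∧ (∀ i, η i ∈ Q.Fp.Γ₀) ∧
      ∀ x, ‖T.Tp x - ∑ i, rankOneP P Q x (ξ i x) (η i x)‖ ≤ ε ∧
           ‖T.Tm x - ∑ i, rankOneM P Q x (ξ i x) (η i x)‖ ≤ ε

end Operators

/-! ## Groupoid actions on fields of Banach spaces; the functor `p_!` -/

section GSpace

variable {G : Type u} {O : Type u} [TopologicalSpace G] [TopologicalSpace O]

/-- An action of a topological groupoid `𝒢` on a u.s.c. field of Banach spaces over
`O = 𝒢⁽⁰⁾`, making it a `𝒢`-Banach space. -/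
structure SpaceAction (𝒢 : TopGroupoid G O) (𝔈 : BanachSpaceFieldB.{u, v} O) :
    Type (max u v) where
  act : ∀ γ : G, 𝔈.E (𝒢.s γ) →L[ℂ] 𝔈.E (𝒢.r γ)
  actInv : ∀ γ : G, 𝔈.E (𝒢.r γ) →L[ℂ] 𝔈.E (𝒢.s γ)
  act_actInv : ∀ γ e, act γ (actInv γ e) = e
  actInv_act : ∀ γ e, actInv γ (act γ e) = e
  isometric : ∀ γ e, ‖act γ e‖ = ‖e‖
  act_mul : ∀ γ γ' (h : 𝒢.s γ = 𝒢.r γ') (e : 𝔈.E (𝒢.s γ')),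
    act (𝒢.mul γ γ') (cast (congrArg 𝔈.E (𝒢.s_mul γ γ' h).symm) e)
      = cast (congrArg 𝔈.E (𝒢.r_mul γ γ' h).symm)
          (act γ (cast (congrArg 𝔈.E h.symm) (act γ' e)))
  sect : ∀ ξ ∈ pbSec 𝒢.s 𝔈.E 𝔈.F.Γ, (fun γ => act γ (ξ γ)) ∈ pbSec 𝒢.r 𝔈.E 𝔈.F.Γ

/-- A continuous field of linear maps between u.s.c. fields of Banach spaces. -/
structure IsLinField (𝔈 𝔉 : BanachSpaceFieldB.{u, v} O)
    (T : ∀ x, 𝔈.E x →L[ℂ] 𝔉.E x) : Prop where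
  maps_sections : ∀ ξ ∈ 𝔈.F.Γ, (fun x => T x (ξ x)) ∈ 𝔉.F.Γ
  locally_bounded : ∀ x₀ : O, ∃ U ∈ nhds x₀, ∃ C : ℝ, ∀ x ∈ U, ‖T x‖ ≤ C

/-- Equivariance of a field of linear maps between `𝒢`-Banach spaces. -/
def IsEquivariantField {𝒢 : TopGroupoid G O} {𝔈 𝔉 : BanachSpaceFieldB.{u, v} O}
    (αE : SpaceAction 𝒢 𝔈) (αF : SpaceAction 𝒢 𝔉)
    (T : ∀ x, 𝔈.E x →L[ℂ] 𝔉.E x) : Prop :=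
  ∀ γ e, αF.act γ (T (𝒢.s γ) e) = T (𝒢.r γ) (αE.act γ e)

end GSpace

section PShriek

variable {G : Type u} {O : Type u} {Y : Type u}
variable [TopologicalSpace G] [TopologicalSpace O] [TopologicalSpace Y]

/-- A continuous field of measures on `Y` over `X` with coefficient map `p`. -/
structure ContFieldOfMeasures [MeasurableSpace Y] (p : Y → O) : Type u where
  μ : O → MeasureTheory.Measure Y
  supp_le : ∀ x, μ x ((p ⁻¹' {x})ᶜ) = 0
  integrable : ∀ φ : C(Y, ℝ), HasCompactSupport φ →
    ∀ x, MeasureTheory.Integrable φ (μ x)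
  cont : ∀ φ : C(Y, ℝ), HasCompactSupport φ →
    Continuous (fun x => ∫ y, φ y ∂(μ x)) ∧
    HasCompactSupport (fun x => ∫ y, φ y ∂(μ x))

/-- Faithfulness: every fibre `Y_x` is the support of `μ_x`. -/
def ContFieldOfMeasures.Faithful [MeasurableSpace Y] {p : Y → O}
    (m : ContFieldOfMeasures p) : Prop :=
  ∀ (x : O) (V : Set Y), IsOpen V → (V ∩ p ⁻¹' {x}).Nonempty → 0 < m.μ x V

variable {𝒢 : TopGroupoid G O} {p : Y → O}

/-- For a `p*(𝒢)`-Banach space, equivariance of a field of operators under the closed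
subgroupoid `Y ×_X Y ⊆ p*(𝒢)` (the elements whose middle component is a unit). -/
def IsYxYEquivariant {PB : TopGroupoid (PullbackCarrier 𝒢 p) Y}
    {𝔈 𝔉 : BanachSpaceFieldB.{u, v} Y}
    (αE : SpaceAction PB 𝔈) (αF : SpaceAction PB 𝔉)
    (T : ∀ y, 𝔈.E y →L[ℂ] 𝔉.E y) : Prop :=
  ∀ t : PullbackCarrier 𝒢 p, t.1.2.1 = 𝒢.unit (p t.1.1) →
    ∀ e, αF.act t (T (PB.s t) e) = T (PB.r t) (αE.act t e)

/-- A realisation of the `𝒢`-Banach space `p_!𝔈Y` associated with a `p*(𝒢)`-Banach space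
`𝔈Y`: the fibre of `p_!𝔈Y` over `x` is the space of `Y ×_X Y`-invariant families
`(e_y)_{y ∈ Y_x}` (with the sup-norm, which equals the norm of each component), realised
through the component maps `comp`. -/
structure PShriekSpace (PB : TopGroupoid (PullbackCarrier 𝒢 p) Y)
    (hPB : IsPullbackGroupoid 𝒢 p PB)
    (𝔈Y : BanachSpaceFieldB.{u, v} Y) (αY : SpaceAction PB 𝔈Y)
    (𝔈X : BanachSpaceFieldB.{u, v} O) (αX : SpaceAction 𝒢 𝔈X) :
    Type (max u v) where
  comp : ∀ (x : O) (_ : 𝔈X.E x) (y : Y), p y = x → 𝔈Y.E y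
  comp_add : ∀ x v w y hy, comp x (v + w) y hy = comp x v y hy + comp x w y hy
  comp_smul : ∀ (x) (c : ℂ) (v) (y) (hy), comp x (c • v) y hy = c • comp x v y hy
  comp_norm : ∀ x v y hy, ‖comp x v y hy‖ = ‖v‖
  comp_invariant : ∀ (t : PullbackCarrier 𝒢 p) (h : t.1.2.1 = 𝒢.unit (p t.1.1))
      (v : 𝔈X.E (p t.1.2.2)),
    αY.act t (cast (congrArg 𝔈Y.E (hPB.s_eq t).symm) (comp (p t.1.2.2) v t.1.2.2 rfl))
      = cast (congrArg 𝔈Y.E (hPB.r_eq t).symm)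
          (comp (p t.1.2.2) v t.1.1
            ((𝒢.s_unit (p t.1.1)).symm.trans ((congrArg 𝒢.s h.symm).trans t.2.2)))
  comp_inj : ∀ (x) (v w : 𝔈X.E x),
    (∀ y hy, comp x v y hy = comp x w y hy) → v = w
  comp_surj : ∀ (x : O) (e : ∀ y : Y, p y = x → 𝔈Y.E y),
    (∀ (t : PullbackCarrier 𝒢 p) (_ : t.1.2.1 = 𝒢.unit (p t.1.1))
       (hz : p t.1.1 = x) (hy : p t.1.2.2 = x),
      αY.act t (cast (congrArg 𝔈Y.E (hPB.s_eq t).symm) (e t.1.2.2 hy))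
        = cast (congrArg 𝔈Y.E (hPB.r_eq t).symm) (e t.1.1 hz)) →
    ∃ v : 𝔈X.E x, ∀ y hy, comp x v y hy = e y hy
  /-- the sections of `p_!𝔈Y` correspond to the `Y ×_X Y`-invariant sections of `𝔈Y` -/
  sections : ∀ ζ : ∀ x, 𝔈X.E x, ζ ∈ 𝔈X.F.Γ ↔
    ∃ δ ∈ 𝔈Y.F.Γ, ∀ y : Y, comp (p y) (ζ (p y)) y rfl = δ y
  /-- the defining relation for the `𝒢`-action `p_!α` -/
  act_comp : ∀ (γ : G) (v : 𝔈X.E (𝒢.s γ)) (z y : Y) (hz : p z = 𝒢.r γ)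
      (hy : p y = 𝒢.s γ),
    comp (𝒢.r γ) (αX.act γ v) z hz
      = cast (congrArg 𝔈Y.E (hPB.r_eq ⟨(z, γ, y), hz, hy.symm⟩))
          (αY.act ⟨(z, γ, y), hz, hy.symm⟩
            (cast (congrArg 𝔈Y.E (hPB.s_eq ⟨(z, γ, y), hz, hy.symm⟩).symm)
              (comp (𝒢.s γ) v y hy)))

end PShriek

/-! ## The pullback functor `Ω* = ρ_! ∘ f_Ω*` along a graph (generalised morphism) -/

section GraphPB

variable {G : Type u} {O : Type u} {H : Type u} {P : Type u} {Ω : Type u}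
variable [TopologicalSpace G] [TopologicalSpace O] [TopologicalSpace H] [TopologicalSpace P]
variable [TopologicalSpace Ω]

/-- A realisation `𝔚 = Ω*𝔈 = ρ_! f_Ω^* 𝔈` of the pullback of an `ℋ`-Banach space `𝔈`
along a graph `Ω` from `𝒢` to `ℋ`: the fibre of `𝔚` over `g ∈ 𝒢⁽⁰⁾` is the space of
invariant families `(e_ω)_{ω ∈ ρ⁻¹(g)}`, `e_ω ∈ 𝔈_{σ(ω)}`, realised through the component
maps `comp`. -/
structure GraphPullbackData {𝒢 : TopGroupoid G O} {ℋ : TopGroupoid H P}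
    (M : GBimodule 𝒢 ℋ Ω)
    (𝔈 : BanachSpaceFieldB.{u, v} P) (αE : SpaceAction ℋ 𝔈)
    (𝔚 : BanachSpaceFieldB.{u, v} O) (αW : SpaceAction 𝒢 𝔚) : Type (max u v) where
  comp : ∀ (g : O) (_ : 𝔚.E g) (ω : Ω), M.left.ρ ω = g → 𝔈.E (M.right.σ ω)
  comp_add : ∀ g v w ω hω, comp g (v + w) ω hω = comp g v ω hω + comp g w ω hω
  comp_smul : ∀ (g) (c : ℂ) (v) (ω) (hω), comp g (c • v) ω hω = c • comp g v ω hω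
  comp_norm : ∀ g v ω hω, ‖comp g v ω hω‖ = ‖v‖
  comp_inj : ∀ (g) (v w : 𝔚.E g), (∀ ω hω, comp g v ω hω = comp g w ω hω) → v = w
  /-- invariance of the families `(e_ω)` under the `Ω ×_{𝒢⁽⁰⁾} Ω`-action, expressed via the
  inner products `⟨ω, ω'⟩_ℋ` -/
  comp_invariant : ∀ (g) (v : 𝔚.E g) (ω ω' : Ω) (hω : M.left.ρ ω = g)
      (hω' : M.left.ρ ω' = g) (η : H) (hη : M.right.σ ω = ℋ.r η)
      (hact : M.right.act ω η = ω'),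
    αE.act η (cast (congrArg 𝔈.E
        ((congrArg M.right.σ hact.symm).trans (M.right.σ_act ω η hη))) (comp g v ω' hω'))
      = cast (congrArg 𝔈.E hη) (comp g v ω hω)
  comp_surj : ∀ (g : O) (e : ∀ ω : Ω, M.left.ρ ω = g → 𝔈.E (M.right.σ ω)),
    (∀ (ω ω' : Ω) (hω : M.left.ρ ω = g) (hω' : M.left.ρ ω' = g) (η : H)
       (hη : M.right.σ ω = ℋ.r η) (hact : M.right.act ω η = ω'),
      αE.act η (cast (congrArg 𝔈.E
          ((congrArg M.right.σ hact.symm).trans (M.right.σ_act ω η hη))) (e ω' hω'))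
        = cast (congrArg 𝔈.E hη) (e ω hω)) →
    ∃ v : 𝔚.E g, ∀ ω hω, comp g v ω hω = e ω hω
  /-- the sections of `𝔚` correspond to the invariant sections of `f_Ω^* 𝔈` over `Ω` -/
  sections : ∀ ζ : ∀ g, 𝔚.E g, ζ ∈ 𝔚.F.Γ ↔
    ∃ δ ∈ pbSec M.right.σ 𝔈.E 𝔈.F.Γ,
      ∀ ω : Ω, comp (M.left.ρ ω) (ζ (M.left.ρ ω)) ω rfl = δ ω
  /-- the defining relation for the `𝒢`-action on `𝔚` -/
  act_comp : ∀ (γ : G) (v : 𝔚.E (𝒢.s γ)) (ω ω'' : Ω) (hω : M.left.ρ ω = 𝒢.r γ)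
      (hω'' : M.left.ρ ω'' = 𝒢.s γ) (η : H) (hη : M.right.σ ω = ℋ.r η)
      (hact : M.right.act ω η = M.left.act γ ω''),
    comp (𝒢.r γ) (αW.act γ v) ω hω
      = cast (congrArg 𝔈.E hη.symm) (αE.act η (cast (congrArg 𝔈.E
          ((M.σ_actl γ ω'' hω''.symm).symm.trans
            ((congrArg M.right.σ hact.symm).trans (M.right.σ_act ω η hη))))
          (comp (𝒢.s γ) v ω'' hω'')))

/-- The property that `TW` is the operator `Ω*T` induced on the pullbacks by an
`ℋ`-equivariant field `T`. -/
def IsGraphPullbackOp {𝒢 : TopGroupoid G O} {ℋ : TopGroupoid H P}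
    {M : GBimodule 𝒢 ℋ Ω}
    {𝔈 𝔉 : BanachSpaceFieldB.{u, v} P} {αE : SpaceAction ℋ 𝔈} {αF : SpaceAction ℋ 𝔉}
    {𝔚E 𝔚F : BanachSpaceFieldB.{u, v} O} {αWE : SpaceAction 𝒢 𝔚E}
    {αWF : SpaceAction 𝒢 𝔚F}
    (DE : GraphPullbackData M 𝔈 αE 𝔚E αWE) (DF : GraphPullbackData M 𝔉 αF 𝔚F αWF)
    (T : ∀ q, 𝔈.E q →L[ℂ] 𝔉.E q) (TW : ∀ g, 𝔚E.E g →L[ℂ] 𝔚F.E g) : Prop :=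
  ∀ g v ω hω, DF.comp g (TW g v) ω hω = T (M.right.σ ω) (DE.comp g v ω hω)

end GraphPB

section HaarDef

variable {G : Type u} {O : Type u} [TopologicalSpace G] [TopologicalSpace O]

open MeasureTheory in
/-- A left Haar system on a locally compact Hausdorff groupoid: a faithful continuous field
of measures over the unit space with coefficient map `r`, invariant under left
translation. -/
structure HaarSystem [MeasurableSpace G] (𝒢 : TopGroupoid G O) : Type u where
  lam : O → Measure G
  supp_le : ∀ x, lam x ((𝒢.r ⁻¹' {x})ᶜ) = 0
  faithful : ∀ (x : O) (V : Set G), IsOpen V → (V ∩ 𝒢.r ⁻¹' {x}).Nonempty → 0 < lam x V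
  integrable : ∀ φ : C(G, ℝ), HasCompactSupport φ → ∀ x, Integrable φ (lam x)
  cont : ∀ φ : C(G, ℝ), HasCompactSupport φ →
    Continuous (fun x => ∫ γ, φ γ ∂(lam x)) ∧
    HasCompactSupport (fun x => ∫ γ, φ γ ∂(lam x))
  left_invariant : ∀ (γ : G) (φ : C(G, ℝ)), HasCompactSupport φ →
    ∫ γ'', φ (𝒢.mul γ γ'') ∂(lam (𝒢.s γ)) = ∫ γ'', φ γ'' ∂(lam (𝒢.r γ))

end HaarDef

/-! ## Statement 15: `Ω* ∘ (Ω')* ≅ (Ω ×_ℋ Ω')*`, i.e. `Ind_ℋ^𝒢 ∘ Ind_𝒦^ℋ = Ind_𝒦^𝒢` -/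

section CastHelpers

variable {X : Type*} {E : X → Type*}

theorem famApp_hcongr {a b : X} (h : a = b) (f : ∀ x, E x) : HEq (f a) (f b) := by
  subst h; rfl

theorem norm_hcongr [∀ x, NormedAddCommGroup (E x)] {a b : X} (h : a = b)
    {x : E a} {y : E b} (hxy : HEq x y) : ‖x‖ = ‖y‖ := by
  subst h; rw [eq_of_heq hxy]

theorem sub_hcongr [∀ x, NormedAddCommGroup (E x)] {a b : X} (h : a = b)
    {x x' : E a} {y y' : E b} (hy : HEq x y) (hy' : HEq x' y') : HEq (x - x') (y - y') := by
  subst h; rw [eq_of_heq hy, eq_of_heq hy']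

theorem cast_map {F : X → Type*} (T : ∀ x, E x → F x) {a b : X} (h : a = b) (x : E a) :
    cast (congrArg F h) (T a x) = T b (cast (congrArg E h) x) := by subst h; rfl

theorem eq_cast_of_heq {a b : X} (h : a = b) {x : E a} {y : E b} (hxy : HEq y x) :
    y = cast (congrArg E h) x := by subst h; exact eq_of_heq hxy

theorem ndrec_heq {α : Sort*} {motive : α → Sort*} {a b : α} (h : a = b) (x : motive a) :
    HEq (Eq.ndrec (motive := motive) x h) x := by subst h; rfl

theorem cast_add' {E : X → Type*} [∀ x, AddCommGroup (E x)] {a b : X} (h : a = b)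
    (x y : E a) : cast (congrArg E h) (x + y) = cast (congrArg E h) x + cast (congrArg E h) y := by
  subst h; rfl

theorem cast_smul' {E : X → Type*} [∀ x, AddCommGroup (E x)] [∀ x, Module ℂ (E x)]
    {a b : X} (h : a = b) (c : ℂ) (x : E a) :
    cast (congrArg E h) (c • x) = c • cast (congrArg E h) x := by
  subst h; rfl

end CastHelpers
section ActionHelpers

variable {H : Type u} {P : Type u} [TopologicalSpace H] [TopologicalSpace P]
variable {ℋ : TopGroupoid H P}

theorem TopGroupoid.unit_mul_unit (x : P) :
    ℋ.mul (ℋ.unit x) (ℋ.unit x) = ℋ.unit x := by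
  have h := ℋ.unit_mul (ℋ.unit x)
  rwa [ℋ.r_unit] at h

section LR
variable {Ω : Type u} [TopologicalSpace Ω]

theorem GLeftAction.inv_act_act (a : GLeftAction ℋ Ω) (η : H) (ω : Ω)
    (hc : ℋ.s η = a.ρ ω) : a.act (ℋ.inv η) (a.act η ω) = ω := by
  have h1 : ℋ.s (ℋ.inv η) = ℋ.r η := ℋ.s_inv η
  rw [← a.mul_act (ℋ.inv η) η ω h1 hc, ℋ.inv_mul]
  rw [show ℋ.s η = a.ρ ω from hc]
  exact a.unit_act ω

theorem GLeftAction.act_inv_act (a : GLeftAction ℋ Ω) (η : H) (ω : Ω)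
    (hc : ℋ.r η = a.ρ ω) : a.act η (a.act (ℋ.inv η) ω) = ω := by
  have h1 : ℋ.s η = ℋ.r (ℋ.inv η) := (ℋ.r_inv η).symm
  have h2 : ℋ.s (ℋ.inv η) = a.ρ ω := (ℋ.s_inv η).trans hc
  rw [← a.mul_act η (ℋ.inv η) ω h1 h2, ℋ.mul_inv]
  rw [show ℋ.r η = a.ρ ω from hc]
  exact a.unit_act ω

theorem GRightAction.act_act_inv (a : GRightAction ℋ Ω) (ω : Ω) (η : H)
    (hc : a.σ ω = ℋ.r η) : a.act (a.act ω η) (ℋ.inv η) = ω := by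
  have h1 : ℋ.s η = ℋ.r (ℋ.inv η) := (ℋ.r_inv η).symm
  rw [← a.act_mul ω η (ℋ.inv η) hc h1, ℋ.mul_inv]
  rw [show ℋ.r η = a.σ ω from hc.symm]
  exact a.act_unit ω

end LR

variable {𝔈 : BanachSpaceFieldB.{u, v} P}

theorem SpaceAction.act_hcongr (α : SpaceAction ℋ 𝔈) {η η' : H} (hη : η = η')
    {e : 𝔈.E (ℋ.s η)} {e' : 𝔈.E (ℋ.s η')} (he : HEq e e') :
    HEq (α.act η e) (α.act η' e') := by
  subst hη; rw [eq_of_heq he]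

theorem SpaceAction.act_inj (α : SpaceAction ℋ 𝔈) (η : H) {e e' : 𝔈.E (ℋ.s η)}
    (h : α.act η e = α.act η e') : e = e' := by
  have := congrArg (α.actInv η) h
  rwa [α.actInv_act, α.actInv_act] at this

theorem SpaceAction.act_unit_heq (α : SpaceAction ℋ 𝔈) (x : P)
    (e : 𝔈.E (ℋ.s (ℋ.unit x))) : HEq (α.act (ℋ.unit x) e) e := by
  have hmu : ℋ.mul (ℋ.unit x) (ℋ.unit x) = ℋ.unit x := TopGroupoid.unit_mul_unit x
  have h : ℋ.s (ℋ.unit x) = ℋ.r (ℋ.unit x) := by rw [ℋ.s_unit, ℋ.r_unit]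
  have key := α.act_mul (ℋ.unit x) (ℋ.unit x) h e
  have l1 : HEq (α.act (ℋ.mul (ℋ.unit x) (ℋ.unit x))
      (cast (congrArg 𝔈.E (ℋ.s_mul (ℋ.unit x) (ℋ.unit x) h).symm) e))
      (α.act (ℋ.unit x) e) :=
    α.act_hcongr hmu (cast_heq _ _)
  have l2 : HEq (cast (congrArg 𝔈.E (ℋ.r_mul (ℋ.unit x) (ℋ.unit x) h).symm)
      (α.act (ℋ.unit x) (cast (congrArg 𝔈.E h.symm) (α.act (ℋ.unit x) e))))
      (α.act (ℋ.unit x) (cast (congrArg 𝔈.E h.symm) (α.act (ℋ.unit x) e))) :=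
    cast_heq _ _
  have l3 : α.act (ℋ.unit x) e
      = α.act (ℋ.unit x) (cast (congrArg 𝔈.E h.symm) (α.act (ℋ.unit x) e)) :=
    eq_of_heq ((l1.symm.trans (heq_of_eq key)).trans l2)
  have l4 : e = cast (congrArg 𝔈.E h.symm) (α.act (ℋ.unit x) e) := α.act_inj _ l3
  exact (((heq_of_eq l4).trans (cast_heq _ _)).symm)

end ActionHelpers
section GPDHelpers

variable {G : Type u} {O : Type u} {H : Type u} {P : Type u} {Ω : Type u}
variable [TopologicalSpace G] [TopologicalSpace O] [TopologicalSpace H] [TopologicalSpace P]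
variable [TopologicalSpace Ω]
variable {𝒢 : TopGroupoid G O} {ℋ : TopGroupoid H P}
variable {M : GBimodule 𝒢 ℋ Ω}
variable {𝔈 : BanachSpaceFieldB.{u, v} P} {αE : SpaceAction ℋ 𝔈}
variable {𝔚 : BanachSpaceFieldB.{u, v} O} {αW : SpaceAction 𝒢 𝔚}
variable (D : GraphPullbackData M 𝔈 αE 𝔚 αW)

theorem GraphPullbackData.comp_hcongr {g g' : O} (hg : g = g')
    {v : 𝔚.E g} {v' : 𝔚.E g'} (hv : HEq v v') {ω ω' : Ω} (hΩ : ω = ω')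
    (hω : M.left.ρ ω = g) (hω' : M.left.ρ ω' = g') :
    HEq (D.comp g v ω hω) (D.comp g' v' ω' hω') := by
  subst hg; subst hΩ; rw [eq_of_heq hv]

theorem GraphPullbackData.comp_sub (g : O) (v w : 𝔚.E g) (ω : Ω)
    (hω : M.left.ρ ω = g) :
    D.comp g (v - w) ω hω = D.comp g v ω hω - D.comp g w ω hω := by
  have h1 : v - w = v + (-1 : ℂ) • w := by simp [sub_eq_add_neg]
  rw [h1, D.comp_add, D.comp_smul]
  simp [sub_eq_add_neg]

theorem GraphPullbackData.comp_invariant_heq (g : O) (v : 𝔚.E g) (ω ω' : Ω)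
    (hω : M.left.ρ ω = g) (hω' : M.left.ρ ω' = g) (η : H)
    (hη : M.right.σ ω = ℋ.r η) (hact : M.right.act ω η = ω')
    {x : 𝔈.E (ℋ.s η)} (hx : HEq x (D.comp g v ω' hω')) :
    HEq (αE.act η x) (D.comp g v ω hω) := by
  have hty : M.right.σ ω' = ℋ.s η :=
    (congrArg M.right.σ hact.symm).trans (M.right.σ_act ω η hη)
  have hx' : x = cast (congrArg 𝔈.E hty) (D.comp g v ω' hω') :=
    eq_cast_of_heq hty hx
  rw [hx', D.comp_invariant g v ω ω' hω hω' η hη hact]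
  exact cast_heq _ _

theorem GraphPullbackData.act_comp_heq (γ : G) (v : 𝔚.E (𝒢.s γ)) (ω ω'' : Ω)
    (hω : M.left.ρ ω = 𝒢.r γ) (hω'' : M.left.ρ ω'' = 𝒢.s γ) (η : H)
    (hη : M.right.σ ω = ℋ.r η) (hact : M.right.act ω η = M.left.act γ ω'')
    {x : 𝔈.E (ℋ.s η)} (hx : HEq x (D.comp (𝒢.s γ) v ω'' hω'')) :
    HEq (D.comp (𝒢.r γ) (αW.act γ v) ω hω) (αE.act η x) := by
  have hty : M.right.σ ω'' = ℋ.s η :=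
    (M.σ_actl γ ω'' hω''.symm).symm.trans
      ((congrArg M.right.σ hact.symm).trans (M.right.σ_act ω η hη))
  have hx' : x = cast (congrArg 𝔈.E hty) (D.comp (𝒢.s γ) v ω'' hω'') :=
    eq_cast_of_heq hty hx
  rw [D.act_comp γ v ω ω'' hω hω'' η hη hact, hx']
  exact cast_heq _ _

end GPDHelpers
section ProjOpen

theorem proj_fiber_open {Xt Yt B : Type*} [TopologicalSpace Xt] [TopologicalSpace Yt]
    [TopologicalSpace B] (f : Xt → B) (p : Yt → B) (hf : Continuous f) (hp : IsOpenMap p) :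
    IsOpenMap (fun z : {z : Xt × Yt // f z.1 = p z.2} => z.1.1) := by
  intro O hO
  obtain ⟨t, ht, hpre⟩ := isOpen_induced_iff.mp hO
  rw [isOpen_iff_mem_nhds]
  rintro x ⟨⟨⟨x', y⟩, hz⟩, hzO, rfl⟩
  have hmem : ((x', y) : Xt × Yt) ∈ t := by
    have : (⟨(x', y), hz⟩ : {z : Xt × Yt // f z.1 = p z.2}) ∈ Subtype.val ⁻¹' t := by
      rw [hpre]; exact hzO
    exact this
  obtain ⟨A, B', hA, hB', hxA, hyB', hAB⟩ := isOpen_prod_iff.mp ht x' y hmem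
  refine Filter.mem_of_superset
    ((hA.inter (hf.isOpen_preimage _ (hp B' hB'))).mem_nhds ⟨hxA, y, hyB', hz.symm⟩) ?_
  rintro u ⟨huA, w, hwB, hw⟩
  refine ⟨⟨(u, w), hw.symm⟩, ?_, rfl⟩
  have : ((u, w) : Xt × Yt) ∈ t := hAB ⟨huA, hwB⟩
  rw [← hpre]; exact this

end ProjOpen
section Aux

variable {G : Type u} {O : Type u} {H : Type u} {P : Type u} {K : Type u} {Qb : Type u}
variable {Ω : Type u} {Ω' : Type u}
variable [TopologicalSpace G] [TopologicalSpace O] [TopologicalSpace H] [TopologicalSpace P]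
variable [TopologicalSpace K] [TopologicalSpace Qb]
variable [TopologicalSpace Ω] [TopologicalSpace Ω']
variable {𝒢 : TopGroupoid G O} {ℋ : TopGroupoid H P} {𝒦 : TopGroupoid K Qb}

/-- The carrier of `Ω ×_{ℋ⁽⁰⁾} Ω'`. -/
abbrev SCar (M : GBimodule 𝒢 ℋ Ω) (M' : GBimodule ℋ 𝒦 Ω') : Type u :=
  {v : Ω × Ω' // M.right.σ v.1 = M'.left.ρ v.2}

/-- The relation defining `Ω ×_ℋ Ω'`. -/
abbrev SRel (M : GBimodule 𝒢 ℋ Ω) (M' : GBimodule ℋ 𝒦 Ω') :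
    SCar M M' → SCar M M' → Prop := fun q q' =>
  ∃ η : H, M.right.σ q.1.1 = ℋ.r η ∧ q'.1.1 = M.right.act q.1.1 η ∧
    q.1.2 = M'.left.act η q'.1.2

variable (M : GBimodule 𝒢 ℋ Ω) (M' : GBimodule ℋ 𝒦 Ω')

theorem srel_refl (q : SCar M M') : SRel M M' q q := by
  refine ⟨ℋ.unit (M.right.σ q.1.1), (ℋ.r_unit _).symm, (M.right.act_unit q.1.1).symm, ?_⟩
  rw [q.2]
  exact (M'.left.unit_act q.1.2).symm

theorem srel_symm {q q' : SCar M M'} (h : SRel M M' q q') : SRel M M' q' q := by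
  obtain ⟨η, h1, h2, h3⟩ := h
  have hσ : M.right.σ q'.1.1 = ℋ.s η := by rw [h2]; exact M.right.σ_act q.1.1 η h1
  have hρ' : ℋ.s η = M'.left.ρ q'.1.2 := hσ.symm.trans q'.2
  refine ⟨ℋ.inv η, hσ.trans (ℋ.r_inv η).symm, ?_, ?_⟩
  · rw [h2]; exact (M.right.act_act_inv q.1.1 η h1).symm
  · rw [h3]
    exact (M'.left.inv_act_act η q'.1.2 hρ').symm

theorem srel_trans {q q' q'' : SCar M M'} (h : SRel M M' q q') (h' : SRel M M' q' q'') :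
    SRel M M' q q'' := by
  obtain ⟨η, h1, h2, h3⟩ := h
  obtain ⟨η', h1', h2', h3'⟩ := h'
  have hs : ℋ.s η = ℋ.r η' := by
    rw [← h1']
    rw [h2]; exact (M.right.σ_act q.1.1 η h1).symm
  have hs' : ℋ.s η' = M'.left.ρ q''.1.2 := by
    have := q''.2
    rw [h2'] at this
    rw [← this]
    exact (M.right.σ_act q'.1.1 η' h1').symm
  refine ⟨ℋ.mul η η', h1.trans (ℋ.r_mul η η' hs).symm, ?_, ?_⟩
  · rw [h2', h2]; exact (M.right.act_mul q.1.1 η η' h1 hs).symm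
  · rw [h3, h3']
    exact (M'.left.mul_act η η' q''.1.2 hs hs').symm

theorem srel_equivalence : Equivalence (SRel M M') :=
  ⟨srel_refl M M', srel_symm M M', srel_trans M M'⟩

theorem srel_of_mk_eq {q q' : SCar M M'}
    (h : Quot.mk (SRel M M') q = Quot.mk (SRel M M') q') : SRel M M' q q' :=
  (Equivalence.eqvGen_iff (srel_equivalence M M')).mp (Quot.eqvGen_exact h)

/-- The "shear" map realising the saturation. -/
def shear (z : {z : SCar M M' × H // M.right.σ z.1.1.1 = ℋ.r z.2}) : SCar M M' := by
  refine ⟨(M.right.act z.1.1.1.1 z.1.2, M'.left.act (ℋ.inv z.1.2) z.1.1.1.2), ?_⟩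
  have h1 : ℋ.s (ℋ.inv z.1.2) = M'.left.ρ z.1.1.1.2 := by
    rw [ℋ.s_inv]; exact z.2.symm.trans z.1.1.2
  rw [M.right.σ_act _ _ z.2, M'.left.ρ_act _ _ h1, ℋ.r_inv]

theorem srel_shear (z : {z : SCar M M' × H // M.right.σ z.1.1.1 = ℋ.r z.2}) :
    SRel M M' z.1.1 (shear M M' z) := by
  refine ⟨z.1.2, z.2, rfl, ?_⟩
  show z.1.1.1.2 = M'.left.act z.1.2 (M'.left.act (ℋ.inv z.1.2) z.1.1.1.2)
  exact (M'.left.act_inv_act z.1.2 z.1.1.1.2 (z.2.symm.trans z.1.1.2)).symm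

theorem continuous_shear : Continuous (shear M M') := by
  apply Continuous.subtype_mk
  apply Continuous.prodMk
  · have c1 : Continuous (fun z : {z : SCar M M' × H // M.right.σ z.1.1.1 = ℋ.r z.2} =>
        (⟨(z.1.1.1.1, z.1.2), z.2⟩ : {p : Ω × H // M.right.σ p.1 = ℋ.r p.2})) := by
      apply Continuous.subtype_mk
      fun_prop
    exact (M.right.continuousOn_act.restrict).comp c1
  · have c2 : Continuous (fun z : {z : SCar M M' × H // M.right.σ z.1.1.1 = ℋ.r z.2} =>
        (⟨(ℋ.inv z.1.2, z.1.1.1.2), by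
          rw [ℋ.s_inv]; exact z.2.symm.trans z.1.1.2⟩ :
          {p : H × Ω' // ℋ.s p.1 = M'.left.ρ p.2})) := by
      apply Continuous.subtype_mk
      exact (ℋ.continuous_inv.comp (by fun_prop)).prodMk (by fun_prop)
    exact (M'.left.continuousOn_act.restrict).comp c2

theorem quotmk_open (hr : IsOpenMap ℋ.r) : IsOpenMap (Quot.mk (SRel M M')) := by
  intro U hU
  rw [isOpen_coinduced]
  have key : Quot.mk (SRel M M') ⁻¹' (Quot.mk (SRel M M') '' U)
      = (fun z : {z : SCar M M' × H // M.right.σ z.1.1.1 = ℋ.r z.2} => z.1.1) ''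
        (shear M M' ⁻¹' U) := by
    ext q
    constructor
    · rintro ⟨p, hpU, hmk⟩
      obtain ⟨η, h1, h2, h3⟩ := srel_of_mk_eq M M' hmk.symm
      refine ⟨⟨(q, η), h1⟩, ?_, rfl⟩
      show shear M M' ⟨(q, η), h1⟩ ∈ U
      have : shear M M' ⟨(q, η), h1⟩ = p := by
        apply Subtype.ext
        apply Prod.ext
        · exact h2.symm
        · show M'.left.act (ℋ.inv η) q.1.2 = p.1.2
          have hρ : ℋ.s η = M'.left.ρ p.1.2 := by
            have := p.2
            rw [h2] at this
            rw [← this]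
            exact (M.right.σ_act q.1.1 η h1).symm
          rw [h3]
          exact M'.left.inv_act_act η p.1.2 hρ
      rw [this]; exact hpU
    · rintro ⟨z, hzU, hz1⟩
      refine ⟨shear M M' z, hzU, ?_⟩
      rw [← hz1]
      exact (Quot.sound (srel_shear M M' z)).symm
  rw [key]
  exact proj_fiber_open _ ℋ.r
    (M.right.continuous_σ.comp (continuous_fst.comp continuous_subtype_val)) hr _
    ((continuous_shear M M').isOpen_preimage U hU)

end Aux
section Aux2

variable {G : Type u} {O : Type u} {H : Type u} {P : Type u} {K : Type u} {Qb : Type u}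
variable {Ω : Type u} {Ω' : Type u}
variable [TopologicalSpace G] [TopologicalSpace O] [TopologicalSpace H] [TopologicalSpace P]
variable [TopologicalSpace K] [TopologicalSpace Qb]
variable [TopologicalSpace Ω] [TopologicalSpace Ω']
variable {𝒢 : TopGroupoid G O} {ℋ : TopGroupoid H P} {𝒦 : TopGroupoid K Qb}
variable {M : GBimodule 𝒢 ℋ Ω} {M' : GBimodule ℋ 𝒦 Ω'}
variable {𝔈 : BanachSpaceFieldB.{u, v} Qb} {αK : SpaceAction 𝒦 𝔈}
variable {𝔚₁ : BanachSpaceFieldB.{u, v} P} {αW₁ : SpaceAction ℋ 𝔚₁}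
variable {𝔚₂ : BanachSpaceFieldB.{u, v} O} {αW₂ : SpaceAction 𝒢 𝔚₂}
variable (D₁ : GraphPullbackData M' 𝔈 αK 𝔚₁ αW₁)
variable (D₂ : GraphPullbackData M 𝔚₁ αW₁ 𝔚₂ αW₂)

/-- The raw family of components over `Ω ×_{ℋ⁽⁰⁾} Ω'`. -/
def rawFam (g : O) (v : 𝔚₂.E g) (vq : SCar M M') (h : M.left.ρ vq.1.1 = g) :
    𝔈.E (M'.right.σ vq.1.2) :=
  D₁.comp (M.right.σ vq.1.1) (D₂.comp g v vq.1.1 h) vq.1.2 vq.2.symm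

theorem rawFam_heq (g : O) (v : 𝔚₂.E g) {vq vq' : SCar M M'} (hR : SRel M M' vq vq')
    (h : M.left.ρ vq.1.1 = g) (h' : M.left.ρ vq'.1.1 = g) :
    HEq (rawFam D₁ D₂ g v vq h) (rawFam D₁ D₂ g v vq' h') := by
  obtain ⟨η, hη, h1, h2⟩ := hR
  have hσ' : M.right.σ vq'.1.1 = ℋ.s η := by rw [h1]; exact M.right.σ_act _ _ hη
  set u := D₂.comp g v vq.1.1 h with hu
  set u' := D₂.comp g v vq'.1.1 h' with hu'
  have step1 : HEq (αW₁.act η (cast (congrArg 𝔚₁.E hσ') u')) u :=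
    D₂.comp_invariant_heq g v vq.1.1 vq'.1.1 h h' η hη h1.symm (cast_heq _ _)
  have hρ₂ : M'.left.ρ vq.1.2 = ℋ.r η := vq.2.symm.trans hη
  have step2 : HEq (rawFam D₁ D₂ g v vq h)
      (D₁.comp (ℋ.r η) (αW₁.act η (cast (congrArg 𝔚₁.E hσ') u')) vq.1.2 hρ₂) :=
    D₁.comp_hcongr hη step1.symm rfl vq.2.symm hρ₂
  set κ := 𝒦.unit (M'.right.σ vq.1.2) with hκdef
  have hκr : M'.right.σ vq.1.2 = 𝒦.r κ := (𝒦.r_unit _).symm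
  have hρ'' : M'.left.ρ vq'.1.2 = ℋ.s η := vq'.2.symm.trans hσ'
  have hactκ : M'.right.act vq.1.2 κ = M'.left.act η vq'.1.2 :=
    (M'.right.act_unit vq.1.2).trans h2
  have hsκ : M'.right.σ vq'.1.2 = 𝒦.s κ :=
    ((M'.σ_actl η vq'.1.2 hρ''.symm).symm.trans
      (congrArg M'.right.σ h2.symm)).trans (𝒦.s_unit _).symm
  set x : 𝔈.E (𝒦.s κ) := cast (congrArg 𝔈.E hsκ) (rawFam D₁ D₂ g v vq' h') with hxdef
  have hx : HEq x (D₁.comp (ℋ.s η) (cast (congrArg 𝔚₁.E hσ') u') vq'.1.2 hρ'') := by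
    refine (cast_heq _ _).trans ?_
    exact D₁.comp_hcongr hσ' (cast_heq _ _).symm rfl vq'.2.symm hρ''
  have step3 : HEq (D₁.comp (ℋ.r η) (αW₁.act η (cast (congrArg 𝔚₁.E hσ') u')) vq.1.2 hρ₂)
      (αK.act κ x) :=
    D₁.act_comp_heq η (cast (congrArg 𝔚₁.E hσ') u') vq.1.2 vq'.1.2 hρ₂ hρ'' κ hκr hactκ hx
  have step4 : HEq (αK.act κ x) x := αK.act_unit_heq _ x
  exact (((step2.trans step3).trans step4).trans (cast_heq _ _))

theorem rawFam_hcongr {g g' : O} (hg : g = g') {v : 𝔚₂.E g} {v' : 𝔚₂.E g'}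
    (hv : HEq v v') (vq : SCar M M') (h : M.left.ρ vq.1.1 = g)
    (h' : M.left.ρ vq.1.1 = g') :
    HEq (rawFam D₁ D₂ g v vq h) (rawFam D₁ D₂ g' v' vq h') := by
  subst hg; rw [eq_of_heq hv]

variable {MQ : GBimodule 𝒢 𝒦 (Quot (SRel M M'))}
variable {𝔚₃ : BanachSpaceFieldB.{u, v} O} {αW₃ : SpaceAction 𝒢 𝔚₃}
variable (DQ : GraphPullbackData MQ 𝔈 αK 𝔚₃ αW₃)
variable (hρQ : ∀ v : SCar M M', MQ.left.ρ (Quot.mk _ v) = M.left.ρ v.1.1)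
variable (hσQ : ∀ v : SCar M M', MQ.right.σ (Quot.mk _ v) = M'.right.σ v.1.2)

/-- The induced family over the quotient. -/
def eFam (g : O) (v : 𝔚₂.E g) :
    ∀ q : Quot (SRel M M'), MQ.left.ρ q = g → 𝔈.E (MQ.right.σ q) :=
  Quot.rec (motive := fun q => MQ.left.ρ q = g → 𝔈.E (MQ.right.σ q))
    (fun vq h =>
      cast (congrArg 𝔈.E (hσQ vq).symm) (rawFam D₁ D₂ g v vq ((hρQ vq).symm.trans h)))
    (fun a b hab => by
      apply eq_of_heq
      refine (ndrec_heq (motive := fun q => MQ.left.ρ q = g → 𝔈.E (MQ.right.σ q)) (Quot.sound hab) _).trans ?_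
      refine Function.hfunext (by rw [Quot.sound hab]) ?_
      intro ha hb _
      exact (cast_heq _ _).trans
        ((rawFam_heq D₁ D₂ g v hab _ _).trans (cast_heq _ _).symm))

theorem eFam_mk (g : O) (v : 𝔚₂.E g) (vq : SCar M M')
    (h : MQ.left.ρ (Quot.mk _ vq) = g) :
    eFam D₁ D₂ hρQ hσQ g v (Quot.mk _ vq) h
      = cast (congrArg 𝔈.E (hσQ vq).symm)
          (rawFam D₁ D₂ g v vq ((hρQ vq).symm.trans h)) := rfl

theorem eFam_congr (g : O) (v : 𝔚₂.E g) {q q' : Quot (SRel M M')} (h : q = q')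
    (hq : MQ.left.ρ q = g) (hq' : MQ.left.ρ q' = g) :
    HEq (eFam D₁ D₂ hρQ hσQ g v q hq) (eFam D₁ D₂ hρQ hσQ g v q' hq') := by
  subst h; rfl

end Aux2
section Aux3

variable {G : Type u} {O : Type u} {H : Type u} {P : Type u} {K : Type u} {Qb : Type u}
variable {Ω : Type u} {Ω' : Type u}
variable [TopologicalSpace G] [TopologicalSpace O] [TopologicalSpace H] [TopologicalSpace P]
variable [TopologicalSpace K] [TopologicalSpace Qb]
variable [TopologicalSpace Ω] [TopologicalSpace Ω']
variable {𝒢 : TopGroupoid G O} {ℋ : TopGroupoid H P} {𝒦 : TopGroupoid K Qb}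
variable {M : GBimodule 𝒢 ℋ Ω} {M' : GBimodule ℋ 𝒦 Ω'}
variable {𝔈 : BanachSpaceFieldB.{u, v} Qb} {αK : SpaceAction 𝒦 𝔈}
variable {𝔚₁ : BanachSpaceFieldB.{u, v} P} {αW₁ : SpaceAction ℋ 𝔚₁}
variable {𝔚₂ : BanachSpaceFieldB.{u, v} O} {αW₂ : SpaceAction 𝒢 𝔚₂}
variable (D₁ : GraphPullbackData M' 𝔈 αK 𝔚₁ αW₁)
variable (D₂ : GraphPullbackData M 𝔚₁ αW₁ 𝔚₂ αW₂)
variable {MQ : GBimodule 𝒢 𝒦 (Quot (SRel M M'))}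
variable {𝔚₃ : BanachSpaceFieldB.{u, v} O} {αW₃ : SpaceAction 𝒢 𝔚₃}
variable (DQ : GraphPullbackData MQ 𝔈 αK 𝔚₃ αW₃)
variable (hρQ : ∀ v : SCar M M', MQ.left.ρ (Quot.mk _ v) = M.left.ρ v.1.1)
variable (hσQ : ∀ v : SCar M M', MQ.right.σ (Quot.mk _ v) = M'.right.σ v.1.2)
variable (hactrQ : ∀ (v : SCar M M') (κ : K) (hc : M'.right.σ v.1.2 = 𝒦.r κ),
      MQ.right.act (Quot.mk _ v) κ
        = Quot.mk _ ⟨(v.1.1, M'.right.act v.1.2 κ),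
            v.2.trans (M'.ρ_actr v.1.2 κ hc).symm⟩)

include hactrQ in
theorem eFam_invariant (g : O) (v : 𝔚₂.E g) :
    ∀ (q q' : Quot (SRel M M')) (hq : MQ.left.ρ q = g) (hq' : MQ.left.ρ q' = g) (κ : K)
       (hκ : MQ.right.σ q = 𝒦.r κ) (hact : MQ.right.act q κ = q'),
      αK.act κ (cast (congrArg 𝔈.E
          ((congrArg MQ.right.σ hact.symm).trans (MQ.right.σ_act q κ hκ)))
          (eFam D₁ D₂ hρQ hσQ g v q' hq'))
        = cast (congrArg 𝔈.E hκ) (eFam D₁ D₂ hρQ hσQ g v q hq) := by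
  intro q
  induction q using Quot.ind with | _ vq =>
  intro q' hq hq' κ hκ hact
  have hκ' : M'.right.σ vq.1.2 = 𝒦.r κ := (hσQ vq).symm.trans hκ
  set vq'' : SCar M M' := ⟨(vq.1.1, M'.right.act vq.1.2 κ),
    vq.2.trans (M'.ρ_actr vq.1.2 κ hκ').symm⟩ with hvq''
  have hq'' : q' = Quot.mk _ vq'' := hact.symm.trans (hactrQ vq κ hκ')
  have h₂ : MQ.left.ρ (Quot.mk _ vq'') = g := (congrArg MQ.left.ρ hq'').symm.trans hq'
  have h₀ : M.left.ρ vq.1.1 = g := (hρQ vq).symm.trans hq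
  apply eq_of_heq
  refine HEq.trans ?_ (cast_heq _ _).symm
  have hx : HEq (cast (congrArg 𝔈.E
      ((congrArg MQ.right.σ hact.symm).trans (MQ.right.σ_act (Quot.mk _ vq) κ hκ)))
      (eFam D₁ D₂ hρQ hσQ g v q' hq'))
      (D₁.comp (M.right.σ vq.1.1) (D₂.comp g v vq.1.1 h₀) vq''.1.2 vq''.2.symm) := by
    refine (cast_heq _ _).trans ?_
    refine (eFam_congr D₁ D₂ hρQ hσQ g v hq'' hq' h₂).trans ?_
    rw [eFam_mk]
    exact cast_heq _ _
  have main := D₁.comp_invariant_heq (M.right.σ vq.1.1) (D₂.comp g v vq.1.1 h₀)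
    vq.1.2 vq''.1.2 vq.2.symm vq''.2.symm κ hκ' rfl hx
  refine main.trans ?_
  rw [eFam_mk]
  exact (cast_heq _ _).symm

/-- The underlying function of the isomorphism `Ω*(Ω'*𝔈) ≅ (Ω ×_ℋ Ω')*𝔈`. -/
noncomputable def isoFun (g : O) (v : 𝔚₂.E g) : 𝔚₃.E g :=
  Classical.choose (DQ.comp_surj g (eFam D₁ D₂ hρQ hσQ g v)
    (eFam_invariant D₁ D₂ hρQ hσQ hactrQ g v))

theorem isoFun_spec (g : O) (v : 𝔚₂.E g) :
    ∀ q hq, DQ.comp g (isoFun D₁ D₂ DQ hρQ hσQ hactrQ g v) q hq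
      = eFam D₁ D₂ hρQ hσQ g v q hq :=
  Classical.choose_spec (DQ.comp_surj g (eFam D₁ D₂ hρQ hσQ g v)
    (eFam_invariant D₁ D₂ hρQ hσQ hactrQ g v))

theorem rawFam_add (g : O) (v w : 𝔚₂.E g) (vq : SCar M M') (h : M.left.ρ vq.1.1 = g) :
    rawFam D₁ D₂ g (v + w) vq h = rawFam D₁ D₂ g v vq h + rawFam D₁ D₂ g w vq h := by
  unfold rawFam
  rw [D₂.comp_add, D₁.comp_add]

theorem rawFam_smul (g : O) (c : ℂ) (v : 𝔚₂.E g) (vq : SCar M M')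
    (h : M.left.ρ vq.1.1 = g) :
    rawFam D₁ D₂ g (c • v) vq h = c • rawFam D₁ D₂ g v vq h := by
  unfold rawFam
  rw [D₂.comp_smul, D₁.comp_smul]

theorem eFam_add (g : O) (v w : 𝔚₂.E g) (q : Quot (SRel M M')) (hq : MQ.left.ρ q = g) :
    eFam D₁ D₂ hρQ hσQ g (v + w) q hq
      = eFam D₁ D₂ hρQ hσQ g v q hq + eFam D₁ D₂ hρQ hσQ g w q hq := by
  induction q using Quot.ind with | _ vq =>
  rw [eFam_mk, eFam_mk, eFam_mk, rawFam_add, cast_add']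
  exact (hσQ vq).symm

theorem eFam_smul (g : O) (c : ℂ) (v : 𝔚₂.E g) (q : Quot (SRel M M'))
    (hq : MQ.left.ρ q = g) :
    eFam D₁ D₂ hρQ hσQ g (c • v) q hq = c • eFam D₁ D₂ hρQ hσQ g v q hq := by
  induction q using Quot.ind with | _ vq =>
  rw [eFam_mk, eFam_mk, rawFam_smul, cast_smul']
  exact (hσQ vq).symm

theorem isoFun_add (g : O) (v w : 𝔚₂.E g) :
    isoFun D₁ D₂ DQ hρQ hσQ hactrQ g (v + w)
      = isoFun D₁ D₂ DQ hρQ hσQ hactrQ g v + isoFun D₁ D₂ DQ hρQ hσQ hactrQ g w := by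
  apply DQ.comp_inj g
  intro q hq
  rw [isoFun_spec, DQ.comp_add, isoFun_spec, isoFun_spec, eFam_add]

theorem isoFun_smul (g : O) (c : ℂ) (v : 𝔚₂.E g) :
    isoFun D₁ D₂ DQ hρQ hσQ hactrQ g (c • v)
      = c • isoFun D₁ D₂ DQ hρQ hσQ hactrQ g v := by
  apply DQ.comp_inj g
  intro q hq
  rw [isoFun_spec, DQ.comp_smul, isoFun_spec, eFam_smul]

theorem isoFun_norm (hsurj : Function.Surjective MQ.left.ρ) (g : O) (v : 𝔚₂.E g) :
    ‖isoFun D₁ D₂ DQ hρQ hσQ hactrQ g v‖ = ‖v‖ := by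
  obtain ⟨q, hq⟩ := hsurj g
  obtain ⟨vq, rfl⟩ := Quot.exists_rep q
  have h1 : ‖isoFun D₁ D₂ DQ hρQ hσQ hactrQ g v‖
      = ‖DQ.comp g (isoFun D₁ D₂ DQ hρQ hσQ hactrQ g v) (Quot.mk _ vq) hq‖ :=
    (DQ.comp_norm _ _ _ _).symm
  rw [h1, isoFun_spec]
  have h2 : ‖eFam D₁ D₂ hρQ hσQ g v (Quot.mk _ vq) hq‖
      = ‖rawFam D₁ D₂ g v vq ((hρQ vq).symm.trans hq)‖ := by
    refine norm_hcongr (hσQ vq) ?_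
    rw [eFam_mk]
    exact cast_heq _ _
  rw [h2]
  unfold rawFam
  rw [D₁.comp_norm, D₂.comp_norm]

end Aux3
section Aux4

variable {G : Type u} {O : Type u} {H : Type u} {P : Type u} {K : Type u} {Qb : Type u}
variable {Ω : Type u} {Ω' : Type u}
variable [TopologicalSpace G] [TopologicalSpace O] [TopologicalSpace H] [TopologicalSpace P]
variable [TopologicalSpace K] [TopologicalSpace Qb]
variable [TopologicalSpace Ω] [TopologicalSpace Ω']
variable {𝒢 : TopGroupoid G O} {ℋ : TopGroupoid H P} {𝒦 : TopGroupoid K Qb}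
variable {M : GBimodule 𝒢 ℋ Ω} {M' : GBimodule ℋ 𝒦 Ω'}
variable {𝔈 : BanachSpaceFieldB.{u, v} Qb} {αK : SpaceAction 𝒦 𝔈}
variable {𝔚₁ : BanachSpaceFieldB.{u, v} P} {αW₁ : SpaceAction ℋ 𝔚₁}
variable {𝔚₂ : BanachSpaceFieldB.{u, v} O} {αW₂ : SpaceAction 𝒢 𝔚₂}
variable (D₁ : GraphPullbackData M' 𝔈 αK 𝔚₁ αW₁)
variable (D₂ : GraphPullbackData M 𝔚₁ αW₁ 𝔚₂ αW₂)
variable {MQ : GBimodule 𝒢 𝒦 (Quot (SRel M M'))}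
variable {𝔚₃ : BanachSpaceFieldB.{u, v} O} {αW₃ : SpaceAction 𝒢 𝔚₃}
variable (DQ : GraphPullbackData MQ 𝔈 αK 𝔚₃ αW₃)
variable (hρQ : ∀ v : SCar M M', MQ.left.ρ (Quot.mk _ v) = M.left.ρ v.1.1)
variable (hσQ : ∀ v : SCar M M', MQ.right.σ (Quot.mk _ v) = M'.right.σ v.1.2)
variable (hactrQ : ∀ (v : SCar M M') (κ : K) (hc : M'.right.σ v.1.2 = 𝒦.r κ),
      MQ.right.act (Quot.mk _ v) κ
        = Quot.mk _ ⟨(v.1.1, M'.right.act v.1.2 κ),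
            v.2.trans (M'.ρ_actr v.1.2 κ hc).symm⟩)

include hactrQ in
theorem isoFun_surj (g : O) (w : 𝔚₃.E g) :
    ∃ v : 𝔚₂.E g, isoFun D₁ D₂ DQ hρQ hσQ hactrQ g v = w := by
  classical
  set e1 : ∀ (ω : Ω), M.left.ρ ω = g → ∀ (ω' : Ω'), M'.left.ρ ω' = M.right.σ ω →
      𝔈.E (M'.right.σ ω') := fun ω hω ω' hω' =>
    cast (congrArg 𝔈.E (hσQ ⟨(ω, ω'), hω'.symm⟩))
      (DQ.comp g w (Quot.mk _ ⟨(ω, ω'), hω'.symm⟩)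
        ((hρQ ⟨(ω, ω'), hω'.symm⟩).trans hω)) with he1
  have inv1 : ∀ (ω : Ω) (hω : M.left.ρ ω = g),
      ∀ (ω' ω''' : Ω') (hω' : M'.left.ρ ω' = M.right.σ ω)
        (hω''' : M'.left.ρ ω''' = M.right.σ ω) (κ : K)
        (hκ : M'.right.σ ω' = 𝒦.r κ) (hact : M'.right.act ω' κ = ω'''),
      αK.act κ (cast (congrArg 𝔈.E ((congrArg M'.right.σ hact.symm).trans
          (M'.right.σ_act ω' κ hκ))) (e1 ω hω ω''' hω'''))
        = cast (congrArg 𝔈.E hκ) (e1 ω hω ω' hω') := by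
    intro ω hω ω' ω''' hω' hω''' κ hκ hact
    set a : SCar M M' := ⟨(ω, ω'), hω'.symm⟩ with ha
    set b : SCar M M' := ⟨(ω, ω'''), hω'''.symm⟩ with hb
    have pfa : MQ.left.ρ (Quot.mk _ a) = g := (hρQ a).trans hω
    have pfb : MQ.left.ρ (Quot.mk _ b) = g := (hρQ b).trans hω
    have hκQ : MQ.right.σ (Quot.mk _ a) = 𝒦.r κ := (hσQ a).trans hκ
    have hactQ : MQ.right.act (Quot.mk _ a) κ = Quot.mk _ b := by
      rw [hactrQ a κ hκ]
      congr 1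
      exact Subtype.ext (Prod.ext rfl hact)
    apply eq_of_heq
    refine HEq.trans ?_ (cast_heq _ _).symm
    have hx : HEq (cast (congrArg 𝔈.E ((congrArg M'.right.σ hact.symm).trans
        (M'.right.σ_act ω' κ hκ))) (e1 ω hω ω''' hω'''))
        (DQ.comp g w (Quot.mk _ b) pfb) :=
      (cast_heq _ _).trans (cast_heq _ _)
    have main := DQ.comp_invariant_heq g w (Quot.mk _ a) (Quot.mk _ b) pfa pfb κ hκQ
      hactQ hx
    exact main.trans (cast_heq _ _).symm
  have u_ex : ∀ (ω : Ω) (hω : M.left.ρ ω = g), ∃ uω : 𝔚₁.E (M.right.σ ω),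
      ∀ ω' hω', D₁.comp (M.right.σ ω) uω ω' hω' = e1 ω hω ω' hω' :=
    fun ω hω => D₁.comp_surj (M.right.σ ω) (e1 ω hω) (inv1 ω hω)
  choose u hu using u_ex
  have inv2 : ∀ (ω ωb : Ω) (hω : M.left.ρ ω = g) (hωb : M.left.ρ ωb = g) (η : H)
      (hη : M.right.σ ω = ℋ.r η) (hact : M.right.act ω η = ωb),
      αW₁.act η (cast (congrArg 𝔚₁.E ((congrArg M.right.σ hact.symm).trans
          (M.right.σ_act ω η hη))) (u ωb hωb))
        = cast (congrArg 𝔚₁.E hη) (u ω hω) := by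
    intro ω ωb hω hωb η hη hact
    apply D₁.comp_inj (ℋ.r η)
    intro ω' hω'
    set ω'' := M'.left.act (ℋ.inv η) ω' with hω''def
    have hsinv : ℋ.s (ℋ.inv η) = M'.left.ρ ω' := (ℋ.s_inv η).trans hω'.symm
    have hρω'' : M'.left.ρ ω'' = ℋ.s η := (M'.left.ρ_act _ _ hsinv).trans (ℋ.r_inv η)
    have hσωb : M.right.σ ωb = ℋ.s η := by
      rw [← hact]; exact M.right.σ_act ω η hη
    have hρω''2 : M'.left.ρ ω'' = M.right.σ ωb := hρω''.trans hσωb.symm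
    have hων : M'.left.ρ ω' = M.right.σ ω := hω'.trans hη.symm
    set κ := 𝒦.unit (M'.right.σ ω') with hκdef
    have hκr : M'.right.σ ω' = 𝒦.r κ := (𝒦.r_unit _).symm
    have hrecov : M'.left.act η ω'' = ω' := M'.left.act_inv_act η ω' hω'.symm
    have hactκ : M'.right.act ω' κ = M'.left.act η ω'' :=
      (M'.right.act_unit ω').trans hrecov.symm
    have hσω'' : M'.right.σ ω'' = M'.right.σ ω' := M'.σ_actl (ℋ.inv η) ω' hsinv
    have hmkb : M.right.σ ωb = M'.left.ρ ω'' := hρω''2.symm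
    have hmka : M.right.σ ω = M'.left.ρ ω' := hων.symm
    have pfa2 : MQ.left.ρ (Quot.mk _ (⟨(ω, ω'), hmka⟩ : SCar M M')) = g :=
      (hρQ _).trans hω
    have pfb2 : MQ.left.ρ (Quot.mk _ (⟨(ωb, ω''), hmkb⟩ : SCar M M')) = g :=
      (hρQ _).trans hωb
    have hmkeq : Quot.mk (SRel M M') ⟨(ωb, ω''), hmkb⟩ = Quot.mk _ ⟨(ω, ω'), hmka⟩ :=
      (Quot.sound ⟨η, hη, hact.symm, hrecov.symm⟩).symm
    -- the auxiliary midpoint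
    have t0 : D₁.comp (M.right.σ ωb) (u ωb hωb) ω'' hρω''2 = e1 ωb hωb ω'' hρω''2 :=
      hu ωb hωb ω'' hρω''2
    have t1 : HEq (D₁.comp (ℋ.s η) (cast (congrArg 𝔚₁.E
        ((congrArg M.right.σ hact.symm).trans (M.right.σ_act ω η hη))) (u ωb hωb))
        ω'' hρω'')
        (DQ.comp g w (Quot.mk _ (⟨(ωb, ω''), hmkb⟩ : SCar M M')) pfb2) :=
      ((D₁.comp_hcongr hσωb.symm (cast_heq _ _) rfl hρω'' hρω''2).trans
        (heq_of_eq t0)).trans (cast_heq _ _)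
    have hxty : MQ.right.σ (Quot.mk _ (⟨(ωb, ω''), hmkb⟩ : SCar M M')) = 𝒦.s κ :=
      (hσQ _).trans (hσω''.trans (𝒦.s_unit _).symm)
    set xκ : 𝔈.E (𝒦.s κ) := cast (congrArg 𝔈.E hxty)
      (DQ.comp g w (Quot.mk _ (⟨(ωb, ω''), hmkb⟩ : SCar M M')) pfb2) with hxκdef
    have hxκ : HEq xκ (D₁.comp (ℋ.s η) (cast (congrArg 𝔚₁.E
        ((congrArg M.right.σ hact.symm).trans (M.right.σ_act ω η hη))) (u ωb hωb))
        ω'' hρω'') := (cast_heq _ _).trans t1.symm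
    have step_a := D₁.act_comp_heq η (cast (congrArg 𝔚₁.E
        ((congrArg M.right.σ hact.symm).trans (M.right.σ_act ω η hη))) (u ωb hωb))
        ω' ω'' hω' hρω'' κ hκr hactκ hxκ
    have step_b : HEq (αK.act κ xκ) xκ := αK.act_unit_heq _ xκ
    have step_c : HEq xκ (DQ.comp g w (Quot.mk _ (⟨(ω, ω'), hmka⟩ : SCar M M')) pfa2) :=
      (cast_heq _ _).trans (DQ.comp_hcongr rfl HEq.rfl hmkeq pfb2 pfa2)
    have rhs : HEq (D₁.comp (ℋ.r η) (cast (congrArg 𝔚₁.E hη) (u ω hω)) ω' hω')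
        (DQ.comp g w (Quot.mk _ (⟨(ω, ω'), hmka⟩ : SCar M M')) pfa2) :=
      ((D₁.comp_hcongr hη.symm (cast_heq _ _) rfl hω' hων).trans
        (heq_of_eq (hu ω hω ω' hων))).trans (cast_heq _ _)
    exact eq_of_heq ((step_a.trans (step_b.trans step_c)).trans rhs.symm)
  obtain ⟨v₀, hv₀⟩ := D₂.comp_surj g (fun ω hω => u ω hω) inv2
  refine ⟨v₀, ?_⟩
  apply DQ.comp_inj g
  intro q hq
  rw [isoFun_spec]
  induction q using Quot.ind with | _ vq =>
  apply eq_of_heq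
  rw [eFam_mk]
  refine (cast_heq _ _).trans ?_
  show HEq (rawFam D₁ D₂ g v₀ vq ((hρQ vq).symm.trans hq)) _
  unfold rawFam
  rw [hv₀ vq.1.1 ((hρQ vq).symm.trans hq), hu vq.1.1 ((hρQ vq).symm.trans hq)
    vq.1.2 vq.2.symm]
  exact (cast_heq _ _).trans (DQ.comp_hcongr rfl HEq.rfl rfl _ hq)
end Aux4
section Aux5

variable {G : Type u} {O : Type u} {H : Type u} {P : Type u} {K : Type u} {Qb : Type u}
variable {Ω : Type u} {Ω' : Type u}
variable [TopologicalSpace G] [TopologicalSpace O] [TopologicalSpace H] [TopologicalSpace P]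
variable [TopologicalSpace K] [TopologicalSpace Qb]
variable [TopologicalSpace Ω] [TopologicalSpace Ω']
variable {𝒢 : TopGroupoid G O} {ℋ : TopGroupoid H P} {𝒦 : TopGroupoid K Qb}
variable {M : GBimodule 𝒢 ℋ Ω} {M' : GBimodule ℋ 𝒦 Ω'}
variable {𝔈 : BanachSpaceFieldB.{u, v} Qb} {αK : SpaceAction 𝒦 𝔈}
variable {𝔚₁ : BanachSpaceFieldB.{u, v} P} {αW₁ : SpaceAction ℋ 𝔚₁}
variable {𝔚₂ : BanachSpaceFieldB.{u, v} O} {αW₂ : SpaceAction 𝒢 𝔚₂}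
variable (D₁ : GraphPullbackData M' 𝔈 αK 𝔚₁ αW₁)
variable (D₂ : GraphPullbackData M 𝔚₁ αW₁ 𝔚₂ αW₂)
variable {MQ : GBimodule 𝒢 𝒦 (Quot (SRel M M'))}
variable {𝔚₃ : BanachSpaceFieldB.{u, v} O} {αW₃ : SpaceAction 𝒢 𝔚₃}
variable (DQ : GraphPullbackData MQ 𝔈 αK 𝔚₃ αW₃)
variable (hρQ : ∀ v : SCar M M', MQ.left.ρ (Quot.mk _ v) = M.left.ρ v.1.1)
variable (hσQ : ∀ v : SCar M M', MQ.right.σ (Quot.mk _ v) = M'.right.σ v.1.2)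
variable (hactrQ : ∀ (v : SCar M M') (κ : K) (hc : M'.right.σ v.1.2 = 𝒦.r κ),
      MQ.right.act (Quot.mk _ v) κ
        = Quot.mk _ ⟨(v.1.1, M'.right.act v.1.2 κ),
            v.2.trans (M'.ρ_actr v.1.2 κ hc).symm⟩)
variable (hactlQ : ∀ (γ : G) (v : SCar M M') (hc : 𝒢.s γ = M.left.ρ v.1.1),
      MQ.left.act γ (Quot.mk _ v)
        = Quot.mk _ ⟨(M.left.act γ v.1.1, v.1.2), (M.σ_actl γ v.1.1 hc).trans v.2⟩)

include hactlQ in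
theorem isoFun_equivariant (hM : IsGraph M) (γ : G) (v : 𝔚₂.E (𝒢.s γ)) :
    isoFun D₁ D₂ DQ hρQ hσQ hactrQ (𝒢.r γ) (αW₂.act γ v)
      = αW₃.act γ (isoFun D₁ D₂ DQ hρQ hσQ hactrQ (𝒢.s γ) v) := by
  apply DQ.comp_inj (𝒢.r γ)
  intro q hq
  rw [isoFun_spec]
  induction q using Quot.ind with | _ vq =>
  obtain ⟨ω₄, hω₄⟩ := hM.ρ_surj (𝒢.s γ)
  have h₁ : M.left.ρ vq.1.1 = 𝒢.r γ := (hρQ vq).symm.trans hq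
  have hγω₄ : M.left.ρ (M.left.act γ ω₄) = 𝒢.r γ := M.left.ρ_act γ ω₄ hω₄.symm
  obtain ⟨η, hη, hactη⟩ := hM.fibre_trans vq.1.1 (M.left.act γ ω₄) (h₁.trans hγω₄.symm)
  have hσ4 : M.right.σ ω₄ = ℋ.s η :=
    (M.σ_actl γ ω₄ hω₄.symm).symm.trans
      ((congrArg M.right.σ hactη.symm).trans (M.right.σ_act vq.1.1 η hη))
  set u₄ := D₂.comp (𝒢.s γ) v ω₄ hω₄ with hu₄
  set x : 𝔚₁.E (ℋ.s η) := cast (congrArg 𝔚₁.E hσ4) u₄ with hx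
  have hρ12 : M'.left.ρ vq.1.2 = ℋ.r η := vq.2.symm.trans hη
  have step1 : HEq (D₂.comp (𝒢.r γ) (αW₂.act γ v) vq.1.1 h₁) (αW₁.act η x) :=
    D₂.act_comp_heq γ v vq.1.1 ω₄ h₁ hω₄ η hη hactη (cast_heq _ _)
  have lhs1 : HEq (rawFam D₁ D₂ (𝒢.r γ) (αW₂.act γ v) vq h₁)
      (D₁.comp (ℋ.r η) (αW₁.act η x) vq.1.2 hρ12) :=
    D₁.comp_hcongr hη step1 rfl vq.2.symm hρ12
  set ω₅ := M'.left.act (ℋ.inv η) vq.1.2 with hω₅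
  have hsinv : ℋ.s (ℋ.inv η) = M'.left.ρ vq.1.2 := (ℋ.s_inv η).trans hρ12.symm
  have hρω₅ : M'.left.ρ ω₅ = ℋ.s η := (M'.left.ρ_act _ _ hsinv).trans (ℋ.r_inv η)
  set κ := 𝒦.unit (M'.right.σ vq.1.2) with hκdef
  have hκr : M'.right.σ vq.1.2 = 𝒦.r κ := (𝒦.r_unit _).symm
  have hrecov : M'.left.act η ω₅ = vq.1.2 := M'.left.act_inv_act η vq.1.2 hρ12.symm
  have hactκ : M'.right.act vq.1.2 κ = M'.left.act η ω₅ :=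
    (M'.right.act_unit vq.1.2).trans hrecov.symm
  have hσω₅ : M'.right.σ ω₅ = M'.right.σ vq.1.2 := M'.σ_actl (ℋ.inv η) vq.1.2 hsinv
  have hmk5 : M.right.σ ω₄ = M'.left.ρ ω₅ := hσ4.trans hρω₅.symm
  set q₅c : SCar M M' := ⟨(ω₄, ω₅), hmk5⟩ with hq₅c
  have hty5 : M'.right.σ ω₅ = 𝒦.s κ := hσω₅.trans (𝒦.s_unit _).symm
  set x₅ : 𝔈.E (𝒦.s κ) := cast (congrArg 𝔈.E hty5)
    (rawFam D₁ D₂ (𝒢.s γ) v q₅c hω₄) with hx₅def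
  have hraw5 : HEq (rawFam D₁ D₂ (𝒢.s γ) v q₅c hω₄)
      (D₁.comp (ℋ.s η) x ω₅ hρω₅) :=
    D₁.comp_hcongr hσ4 (cast_heq _ _).symm rfl hmk5.symm hρω₅
  have hx₅ : HEq x₅ (D₁.comp (ℋ.s η) x ω₅ hρω₅) := (cast_heq _ _).trans hraw5
  have step2 := D₁.act_comp_heq η x vq.1.2 ω₅ hρ12 hρω₅ κ hκr hactκ hx₅
  have step3 : HEq (αK.act κ x₅) x₅ := αK.act_unit_heq _ x₅
  -- LHS ≍ raw q₅c
  have lhs : HEq (eFam D₁ D₂ hρQ hσQ (𝒢.r γ) (αW₂.act γ v) (Quot.mk _ vq) hq)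
      (rawFam D₁ D₂ (𝒢.s γ) v q₅c hω₄) := by
    rw [eFam_mk]
    exact ((((cast_heq _ _).trans lhs1).trans step2).trans step3).trans (cast_heq _ _)
  -- RHS
  set q₅ := Quot.mk (SRel M M') q₅c with hq₅q
  have hq₅ : MQ.left.ρ q₅ = 𝒢.s γ := (hρQ q₅c).trans hω₄
  set κQ := 𝒦.unit (MQ.right.σ (Quot.mk (SRel M M') vq)) with hκQdef
  have hκQ : MQ.right.σ (Quot.mk (SRel M M') vq) = 𝒦.r κQ := (𝒦.r_unit _).symm
  have hrel : Quot.mk (SRel M M') vq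
      = Quot.mk (SRel M M') ⟨(M.left.act γ ω₄, ω₅),
          (M.σ_actl γ ω₄ hω₄.symm).trans hmk5⟩ :=
    Quot.sound ⟨η, hη, hactη.symm, hrecov.symm⟩
  have hactQ : MQ.right.act (Quot.mk (SRel M M') vq) κQ = MQ.left.act γ q₅ := by
    rw [MQ.right.act_unit (Quot.mk (SRel M M') vq), hactlQ γ q₅c hω₄.symm]
    exact hrel
  have htyQ : M'.right.σ ω₅ = 𝒦.s κQ :=
    hσω₅.trans ((hσQ vq).symm.trans (𝒦.s_unit _).symm)
  set yQ : 𝔈.E (𝒦.s κQ) := cast (congrArg 𝔈.E htyQ)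
    (rawFam D₁ D₂ (𝒢.s γ) v q₅c hω₄) with hyQdef
  have h6 : HEq (rawFam D₁ D₂ (𝒢.s γ) v q₅c hω₄)
      (DQ.comp (𝒢.s γ) (isoFun D₁ D₂ DQ hρQ hσQ hactrQ (𝒢.s γ) v) q₅ hq₅) := by
    rw [isoFun_spec, eFam_mk]
    exact (cast_heq _ _).symm
  have hyQ : HEq yQ
      (DQ.comp (𝒢.s γ) (isoFun D₁ D₂ DQ hρQ hσQ hactrQ (𝒢.s γ) v) q₅ hq₅) :=
    (cast_heq _ _).trans h6
  have stepR := DQ.act_comp_heq γ (isoFun D₁ D₂ DQ hρQ hσQ hactrQ (𝒢.s γ) v)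
    (Quot.mk _ vq) q₅ hq hq₅ κQ hκQ hactQ hyQ
  have stepR2 : HEq (αK.act κQ yQ) yQ := αK.act_unit_heq _ yQ
  have rhs : HEq (DQ.comp (𝒢.r γ)
      (αW₃.act γ (isoFun D₁ D₂ DQ hρQ hσQ hactrQ (𝒢.s γ) v)) (Quot.mk _ vq) hq)
      (rawFam D₁ D₂ (𝒢.s γ) v q₅c hω₄) :=
    (stepR.trans stepR2).trans (cast_heq _ _)
  exact eq_of_heq (lhs.trans rhs.symm)

end Aux5
section Aux6

variable {G : Type u} {O : Type u} {H : Type u} {P : Type u} {K : Type u} {Qb : Type u}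
variable {Ω : Type u} {Ω' : Type u}
variable [TopologicalSpace G] [TopologicalSpace O] [TopologicalSpace H] [TopologicalSpace P]
variable [TopologicalSpace K] [TopologicalSpace Qb]
variable [TopologicalSpace Ω] [TopologicalSpace Ω']
variable {𝒢 : TopGroupoid G O} {ℋ : TopGroupoid H P} {𝒦 : TopGroupoid K Qb}
variable {M : GBimodule 𝒢 ℋ Ω} {M' : GBimodule ℋ 𝒦 Ω'}
variable {𝔈 : BanachSpaceFieldB.{u, v} Qb} {αK : SpaceAction 𝒦 𝔈}
variable {𝔚₁ : BanachSpaceFieldB.{u, v} P} {αW₁ : SpaceAction ℋ 𝔚₁}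
variable {𝔚₂ : BanachSpaceFieldB.{u, v} O} {αW₂ : SpaceAction 𝒢 𝔚₂}
variable (D₁ : GraphPullbackData M' 𝔈 αK 𝔚₁ αW₁)
variable (D₂ : GraphPullbackData M 𝔚₁ αW₁ 𝔚₂ αW₂)
variable {MQ : GBimodule 𝒢 𝒦 (Quot (SRel M M'))}
variable {𝔚₃ : BanachSpaceFieldB.{u, v} O} {αW₃ : SpaceAction 𝒢 𝔚₃}
variable (DQ : GraphPullbackData MQ 𝔈 αK 𝔚₃ αW₃)
variable (hρQ : ∀ v : SCar M M', MQ.left.ρ (Quot.mk _ v) = M.left.ρ v.1.1)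
variable (hσQ : ∀ v : SCar M M', MQ.right.σ (Quot.mk _ v) = M'.right.σ v.1.2)
variable (hactrQ : ∀ (v : SCar M M') (κ : K) (hc : M'.right.σ v.1.2 = 𝒦.r κ),
      MQ.right.act (Quot.mk _ v) κ
        = Quot.mk _ ⟨(v.1.1, M'.right.act v.1.2 κ),
            v.2.trans (M'.ρ_actr v.1.2 κ hc).symm⟩)

/-- The value of `Ω*Ω'*` on sections, identified over a point of the quotient. -/
theorem iso_comp_heq (ζ : ∀ g, 𝔚₂.E g) (vq : SCar M M') :
    HEq (DQ.comp (MQ.left.ρ (Quot.mk _ vq))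
        (isoFun D₁ D₂ DQ hρQ hσQ hactrQ (MQ.left.ρ (Quot.mk _ vq))
          (ζ (MQ.left.ρ (Quot.mk _ vq)))) (Quot.mk _ vq) rfl)
      (D₁.comp (M.right.σ vq.1.1)
        (D₂.comp (M.left.ρ vq.1.1) (ζ (M.left.ρ vq.1.1)) vq.1.1 rfl)
        vq.1.2 vq.2.symm) := by
  rw [isoFun_spec, eFam_mk]
  exact (cast_heq _ _).trans
    (rawFam_hcongr D₁ D₂ (hρQ vq) (famApp_hcongr (hρQ vq) ζ) vq _ rfl)

include hactrQ in
theorem isoFun_sections (hℋop : IsOpenMap ℋ.r) (hM' : IsGraph M') (ζ : ∀ g, 𝔚₂.E g) :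
    ζ ∈ 𝔚₂.F.Γ
      ↔ (fun g => isoFun D₁ D₂ DQ hρQ hσQ hactrQ g (ζ g)) ∈ 𝔚₃.F.Γ := by
  have tri : ∀ {p : Qb} (a b c : 𝔈.E p), ‖a - c‖ ≤ ‖a - b‖ + ‖b - c‖ := by
    intro p a b c
    calc ‖a - c‖ = ‖(a - b) + (b - c)‖ := by rw [sub_add_sub_cancel]
    _ ≤ ‖a - b‖ + ‖b - c‖ := norm_add_le _ _
  constructor
  · -- forward direction
    intro hζ
    obtain ⟨δ, hδmem, hδ⟩ := (D₂.sections ζ).mp hζ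
    refine (DQ.sections _).mpr ⟨fun q => DQ.comp (MQ.left.ρ q)
      (isoFun D₁ D₂ DQ hρQ hσQ hactrQ (MQ.left.ρ q) (ζ (MQ.left.ρ q))) q rfl,
      ?_, fun q => rfl⟩
    intro q₀ ε hε
    induction q₀ using Quot.ind with | _ vq₀ =>
    obtain ⟨γ₁, hγ₁Γ, V, hV, hVbound⟩ := hδmem vq₀.1.1 (ε/2) (by positivity)
    obtain ⟨δ₁, hδ₁mem, hδ₁⟩ := (D₁.sections γ₁).mp hγ₁Γ
    obtain ⟨γE, hγEΓ, V', hV', hV'bound⟩ := hδ₁mem vq₀.1.2 (ε/2) (by positivity)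
    obtain ⟨U, hUsub, hUopen, hU0⟩ := mem_nhds_iff.mp hV
    obtain ⟨U', hU'sub, hU'open, hU'0⟩ := mem_nhds_iff.mp hV'
    have hsetopen : IsOpen {p : SCar M M' | p.1.1 ∈ U ∧ p.1.2 ∈ U'} := by
      have : {p : SCar M M' | p.1.1 ∈ U ∧ p.1.2 ∈ U'}
          = Subtype.val ⁻¹' (U ×ˢ U') := rfl
      rw [this]
      exact (hUopen.prod hU'open).preimage continuous_subtype_val
    set W := Quot.mk (SRel M M') '' {p : SCar M M' | p.1.1 ∈ U ∧ p.1.2 ∈ U'} with hW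
    have hWopen : IsOpen W := quotmk_open M M' hℋop _ hsetopen
    have hq₀W : Quot.mk (SRel M M') vq₀ ∈ W := ⟨vq₀, ⟨hU0, hU'0⟩, rfl⟩
    refine ⟨γE, hγEΓ, W, hWopen.mem_nhds hq₀W, ?_⟩
    rintro q ⟨vq, ⟨hqU, hqU'⟩, rfl⟩
    -- transport the difference down to `σ' vq.1.2`
    have hkey : HEq (DQ.comp (MQ.left.ρ (Quot.mk _ vq))
          (isoFun D₁ D₂ DQ hρQ hσQ hactrQ (MQ.left.ρ (Quot.mk _ vq))
            (ζ (MQ.left.ρ (Quot.mk _ vq)))) (Quot.mk _ vq) rfl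
          - γE (MQ.right.σ (Quot.mk _ vq)))
        (D₁.comp (M.right.σ vq.1.1) (δ vq.1.1) vq.1.2 vq.2.symm
          - γE (M'.right.σ vq.1.2)) := by
      refine sub_hcongr (E := 𝔈.E) (hσQ vq) ?_ (famApp_hcongr (hσQ vq) γE)
      refine (iso_comp_heq D₁ D₂ DQ hρQ hσQ hactrQ ζ vq).trans ?_
      rw [hδ vq.1.1]
    rw [norm_hcongr (E := 𝔈.E) (hσQ vq) hkey]
    have t3 : D₁.comp (M.right.σ vq.1.1) (γ₁ (M.right.σ vq.1.1)) vq.1.2 vq.2.symm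
        = δ₁ vq.1.2 := by
      rw [← hδ₁ vq.1.2]
      exact eq_of_heq (D₁.comp_hcongr vq.2 (famApp_hcongr vq.2 γ₁) rfl vq.2.symm rfl)
    refine le_trans (tri _ (δ₁ vq.1.2) _) ?_
    have b1 : ‖D₁.comp (M.right.σ vq.1.1) (δ vq.1.1) vq.1.2 vq.2.symm - δ₁ vq.1.2‖
        ≤ ε/2 := by
      rw [← t3, ← D₁.comp_sub, D₁.comp_norm]
      exact hVbound vq.1.1 (hUsub hqU)
    have b2 : ‖δ₁ vq.1.2 - γE (M'.right.σ vq.1.2)‖ ≤ ε/2 := hV'bound vq.1.2 (hU'sub hqU')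
    linarith
  · -- backward direction
    intro hζ₃
    obtain ⟨δ', hδ'mem, hδ'⟩ := (DQ.sections _).mp hζ₃
    refine (D₂.sections ζ).mpr
      ⟨fun ω => D₂.comp (M.left.ρ ω) (ζ (M.left.ρ ω)) ω rfl, ?_, fun ω => rfl⟩
    intro ω₀ ε hε
    obtain ⟨ω₀', hω₀'⟩ := hM'.ρ_surj (M.right.σ ω₀)
    set q₀c : SCar M M' := ⟨(ω₀, ω₀'), hω₀'.symm⟩ with hq₀c
    have hσq₀ : MQ.right.σ (Quot.mk (SRel M M') q₀c) = M'.right.σ ω₀' := hσQ q₀c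
    have hρq₀ : MQ.left.ρ (Quot.mk (SRel M M') q₀c) = M.left.ρ ω₀ := hρQ q₀c
    obtain ⟨γ₁, hγ₁Γ, hγ₁close⟩ := 𝔚₁.F.dense_eval (M.right.σ ω₀)
      (D₂.comp (M.left.ρ ω₀) (ζ (M.left.ρ ω₀)) ω₀ rfl) (ε/6) (by positivity)
    obtain ⟨δ₁, hδ₁mem, hδ₁⟩ := (D₁.sections γ₁).mp hγ₁Γ
    obtain ⟨γE, hγEΓ, Wq, hWq, hWbound⟩ := hδ'mem (Quot.mk _ q₀c) (ε/6) (by positivity)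
    obtain ⟨γE', hγE'Γ, V', hV', hV'bound⟩ := hδ₁mem ω₀' (ε/6) (by positivity)
    -- the section γE - γE' and upper semicontinuity of its norm
    have hdiffΓ : (fun p => γE p - γE' p) ∈ 𝔈.F.Γ := by
      have h1 := 𝔈.F.add_mem hγEΓ (𝔈.F.smul_mem (-1 : ℂ) hγE'Γ)
      have h2 : (fun p => γE p + (-1 : ℂ) • γE' p) = fun p => γE p - γE' p := by
        funext p; rw [neg_one_smul, ← sub_eq_add_neg]
      rwa [h2] at h1
    have husc := 𝔈.F.usc_norm _ hdiffΓ
    -- value of the difference at σ' ω₀'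
    have hA : HEq (δ' (Quot.mk _ q₀c))
        (D₁.comp (M.right.σ ω₀) (D₂.comp (M.left.ρ ω₀) (ζ (M.left.ρ ω₀)) ω₀ rfl)
          ω₀' hω₀') := by
      rw [← hδ' (Quot.mk _ q₀c)]
      exact iso_comp_heq D₁ D₂ DQ hρQ hσQ hactrQ ζ q₀c
    have hδ₁ω₀' : D₁.comp (M.right.σ ω₀) (γ₁ (M.right.σ ω₀)) ω₀' hω₀' = δ₁ ω₀' := by
      rw [← hδ₁ ω₀']
      exact eq_of_heq
        (D₁.comp_hcongr hω₀'.symm (famApp_hcongr hω₀'.symm γ₁) rfl hω₀' rfl)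
    have hval : ‖γE (M'.right.σ ω₀') - γE' (M'.right.σ ω₀')‖ < 2*ε/3 := by
      have e1 : ‖γE (M'.right.σ ω₀') - cast (congrArg 𝔈.E hσq₀)
          (δ' (Quot.mk _ q₀c))‖ ≤ ε/6 := by
        have : ‖δ' (Quot.mk _ q₀c) - γE (MQ.right.σ (Quot.mk _ q₀c))‖ ≤ ε/6 :=
          hWbound _ (mem_of_mem_nhds hWq)
        rw [← norm_neg]
        rw [show -(γE (M'.right.σ ω₀') - cast (congrArg 𝔈.E hσq₀)
            (δ' (Quot.mk _ q₀c)))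
          = cast (congrArg 𝔈.E hσq₀) (δ' (Quot.mk _ q₀c))
              - γE (M'.right.σ ω₀') from neg_sub _ _]
        rw [← norm_hcongr (E := 𝔈.E) hσq₀
          (sub_hcongr (E := 𝔈.E) hσq₀ (cast_heq _ _).symm
            (famApp_hcongr hσq₀ γE))]
        exact this
      have e2 : ‖cast (congrArg 𝔈.E hσq₀) (δ' (Quot.mk _ q₀c)) - δ₁ ω₀'‖ < ε/6 := by
        have heq2 : HEq (cast (congrArg 𝔈.E hσq₀) (δ' (Quot.mk _ q₀c)) - δ₁ ω₀')
            (D₁.comp (M.right.σ ω₀)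
              (D₂.comp (M.left.ρ ω₀) (ζ (M.left.ρ ω₀)) ω₀ rfl
                - γ₁ (M.right.σ ω₀)) ω₀' hω₀') := by
          rw [D₁.comp_sub, hδ₁ω₀']
          exact heq_of_eq (congrArg (· - δ₁ ω₀')
            (eq_of_heq ((cast_heq _ _).trans hA)))
        rw [norm_hcongr (E := 𝔈.E) rfl heq2, D₁.comp_norm, ← norm_neg, neg_sub]
        exact hγ₁close
      have e3 : ‖δ₁ ω₀' - γE' (M'.right.σ ω₀')‖ ≤ ε/6 :=
        hV'bound ω₀' (mem_of_mem_nhds hV')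
      have := tri (γE (M'.right.σ ω₀')) (cast (congrArg 𝔈.E hσq₀)
        (δ' (Quot.mk _ q₀c))) (γE' (M'.right.σ ω₀'))
      have := tri (cast (congrArg 𝔈.E hσq₀) (δ' (Quot.mk _ q₀c))) (δ₁ ω₀')
        (γE' (M'.right.σ ω₀'))
      calc ‖γE (M'.right.σ ω₀') - γE' (M'.right.σ ω₀')‖
          ≤ ‖γE (M'.right.σ ω₀') - cast (congrArg 𝔈.E hσq₀)
              (δ' (Quot.mk _ q₀c))‖
            + ‖cast (congrArg 𝔈.E hσq₀) (δ' (Quot.mk _ q₀c))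
              - γE' (M'.right.σ ω₀')‖ := tri _ _ _
        _ ≤ ‖γE (M'.right.σ ω₀') - cast (congrArg 𝔈.E hσq₀)
              (δ' (Quot.mk _ q₀c))‖
            + (‖cast (congrArg 𝔈.E hσq₀) (δ' (Quot.mk _ q₀c)) - δ₁ ω₀'‖
              + ‖δ₁ ω₀' - γE' (M'.right.σ ω₀')‖) := by
            have := tri (cast (congrArg 𝔈.E hσq₀) (δ' (Quot.mk _ q₀c)))
              (δ₁ ω₀') (γE' (M'.right.σ ω₀'))
            linarith
        _ < 2*ε/3 := by linarith
    have hN : {p : Qb | ‖γE p - γE' p‖ < 2*ε/3} ∈ nhds (M'.right.σ ω₀') :=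
      husc _ _ hval
    -- neighbourhoods
    have hpre : Quot.mk (SRel M M') ⁻¹' Wq ∈ nhds q₀c :=
      continuous_quot_mk.continuousAt.preimage_mem_nhds hWq
    obtain ⟨T, hTsub, hTopen, hT0⟩ := mem_nhds_iff.mp hpre
    obtain ⟨T2, hT2open, hT2pre⟩ := isOpen_induced_iff.mp hTopen
    have hT20 : ((ω₀, ω₀') : Ω × Ω') ∈ T2 := by
      have : q₀c ∈ Subtype.val ⁻¹' T2 := by rw [hT2pre]; exact hT0
      exact this
    obtain ⟨A2, B2, hA2, hB2, hωA, hω'B, hAB⟩ := isOpen_prod_iff.mp hT2open ω₀ ω₀' hT20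
    obtain ⟨V'o, hV'sub, hV'open, hV'0⟩ := mem_nhds_iff.mp hV'
    obtain ⟨No, hNsub, hNopen, hN0⟩ := mem_nhds_iff.mp hN
    set U' := B2 ∩ V'o ∩ (M'.right.σ ⁻¹' No) with hU'
    have hU'open : IsOpen U' :=
      ((hB2.inter hV'open).inter (hNopen.preimage M'.right.continuous_σ))
    have hω₀'U' : ω₀' ∈ U' := ⟨⟨hω'B, hV'0⟩, hN0⟩
    set V := A2 ∩ (M.right.σ ⁻¹' (M'.left.ρ '' U')) with hVdef
    have hVopen : IsOpen V :=
      hA2.inter ((hM'.ρ_open U' hU'open).preimage M.right.continuous_σ)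
    have hV0 : ω₀ ∈ V := ⟨hωA, ⟨ω₀', hω₀'U', hω₀'⟩⟩
    refine ⟨γ₁, hγ₁Γ, V, hVopen.mem_nhds hV0, ?_⟩
    rintro ω ⟨hωA2, ω', hω'U', hρω'⟩
    set vqc : SCar M M' := ⟨(ω, ω'), hρω'.symm⟩ with hvqc
    have hσvq : MQ.right.σ (Quot.mk (SRel M M') vqc) = M'.right.σ ω' := hσQ vqc
    have hmkW : Quot.mk (SRel M M') vqc ∈ Wq := by
      apply hTsub
      have : vqc ∈ Subtype.val ⁻¹' T2 := hAB ⟨hωA2, hω'U'.1.1⟩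
      rw [hT2pre] at this
      exact this
    -- main estimate
    have hnorm : ‖D₂.comp (M.left.ρ ω) (ζ (M.left.ρ ω)) ω rfl - γ₁ (M.right.σ ω)‖
        = ‖cast (congrArg 𝔈.E hσvq) (δ' (Quot.mk _ vqc)) - δ₁ ω'‖ := by
      rw [← D₁.comp_norm (M.right.σ ω)
        (D₂.comp (M.left.ρ ω) (ζ (M.left.ρ ω)) ω rfl - γ₁ (M.right.σ ω)) ω' hρω']
      congr 1
      rw [D₁.comp_sub]
      have hAω : D₁.comp (M.right.σ ω)
          (D₂.comp (M.left.ρ ω) (ζ (M.left.ρ ω)) ω rfl) ω' hρω'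
          = cast (congrArg 𝔈.E hσvq) (δ' (Quot.mk _ vqc)) := by
        apply eq_of_heq
        refine HEq.trans ?_ (cast_heq _ _).symm
        rw [← hδ' (Quot.mk _ vqc)]
        exact (iso_comp_heq D₁ D₂ DQ hρQ hσQ hactrQ ζ vqc).symm
      have hBω : D₁.comp (M.right.σ ω) (γ₁ (M.right.σ ω)) ω' hρω' = δ₁ ω' := by
        rw [← hδ₁ ω']
        exact eq_of_heq
          (D₁.comp_hcongr hρω'.symm (famApp_hcongr hρω'.symm γ₁) rfl hρω' rfl)
      rw [hAω, hBω]
    rw [hnorm]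
    have f1 : ‖cast (congrArg 𝔈.E hσvq) (δ' (Quot.mk _ vqc))
        - γE (M'.right.σ ω')‖ ≤ ε/6 := by
      rw [← norm_hcongr (E := 𝔈.E) hσvq
        (sub_hcongr (E := 𝔈.E) hσvq (cast_heq _ _).symm
          (famApp_hcongr hσvq γE))]
      exact hWbound _ hmkW
    have f2 : ‖γE (M'.right.σ ω') - γE' (M'.right.σ ω')‖ < 2*ε/3 :=
      hNsub hω'U'.2
    have f3 : ‖γE' (M'.right.σ ω') - δ₁ ω'‖ ≤ ε/6 := by
      rw [← norm_neg, neg_sub]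
      exact hV'bound ω' (hV'sub hω'U'.1.2)
    have g1 := tri (cast (congrArg 𝔈.E hσvq) (δ' (Quot.mk _ vqc)))
      (γE (M'.right.σ ω')) (δ₁ ω')
    have g2 := tri (γE (M'.right.σ ω')) (γE' (M'.right.σ ω')) (δ₁ ω')
    linarith

end Aux6
section Statement15

variable {G : Type u} {O : Type u} {H : Type u} {P : Type u} {K : Type u} {Qb : Type u}
variable {Ω : Type u} {Ω' : Type u}
variable [TopologicalSpace G] [TopologicalSpace O] [TopologicalSpace H] [TopologicalSpace P]
variable [TopologicalSpace K] [TopologicalSpace Qb]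
variable [TopologicalSpace Ω] [TopologicalSpace Ω']

/-- **Composition of pullbacks along graphs.**  Let `𝒢`, `ℋ`, `𝒦` be locally compact
Hausdorff groupoids with open range and source maps carrying left Haar systems, `Ω` a graph
from `𝒢` to `ℋ` and `Ω'` a graph from `ℋ` to `𝒦`.  Then `Ω* ∘ (Ω')* ≅ (Ω ×_ℋ Ω')*` as
functors from the `𝒦`-Banach spaces to the `𝒢`-Banach spaces; in particular, for
equivalences, `Ind_ℋ^𝒢 ∘ Ind_𝒦^ℋ = Ind_𝒦^𝒢`. -/
theorem composition_of_graph_pullbacks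
    [LocallyCompactSpace G] [T2Space G] [LocallyCompactSpace O] [T2Space O]
    [LocallyCompactSpace H] [T2Space H] [LocallyCompactSpace P] [T2Space P]
    [LocallyCompactSpace K] [T2Space K] [LocallyCompactSpace Qb] [T2Space Qb]
    [LocallyCompactSpace Ω] [T2Space Ω] [LocallyCompactSpace Ω'] [T2Space Ω']
    [MeasurableSpace G] [MeasurableSpace H] [MeasurableSpace K]
    {𝒢 : TopGroupoid G O} {ℋ : TopGroupoid H P} {𝒦 : TopGroupoid K Qb}
    (h𝒢 : 𝒢.OpenMaps) (hℋ : ℋ.OpenMaps) (h𝒦 : 𝒦.OpenMaps)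
    (lamG : HaarSystem 𝒢) (lamH : HaarSystem ℋ) (lamK : HaarSystem 𝒦)
    (M : GBimodule 𝒢 ℋ Ω) (hM : IsGraph M)
    (M' : GBimodule ℋ 𝒦 Ω') (hM' : IsGraph M')
    -- the composition `Ω'' = Ω ×_ℋ Ω'` with its induced bimodule structure:
    (MQ : GBimodule 𝒢 𝒦 (Quot (fun
        (q q' : {v : Ω × Ω' // M.right.σ v.1 = M'.left.ρ v.2}) =>
        ∃ η : H, M.right.σ q.1.1 = ℋ.r η ∧ q'.1.1 = M.right.act q.1.1 η ∧
          q.1.2 = M'.left.act η q'.1.2)))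
    (hρQ : ∀ v, MQ.left.ρ (Quot.mk _ v) = M.left.ρ v.1.1)
    (hσQ : ∀ v, MQ.right.σ (Quot.mk _ v) = M'.right.σ v.1.2)
    (hactlQ : ∀ (γ : G) v (hc : 𝒢.s γ = M.left.ρ v.1.1),
      MQ.left.act γ (Quot.mk _ v)
        = Quot.mk _ ⟨(M.left.act γ v.1.1, v.1.2), (M.σ_actl γ v.1.1 hc).trans v.2⟩)
    (hactrQ : ∀ v (κ : K) (hc : M'.right.σ v.1.2 = 𝒦.r κ),
      MQ.right.act (Quot.mk _ v) κ
        = Quot.mk _ ⟨(v.1.1, M'.right.act v.1.2 κ),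
            v.2.trans (M'.ρ_actr v.1.2 κ hc).symm⟩)
    (hMQ : IsGraph MQ) :
    -- for every `𝒦`-Banach space `𝔈` with realisations `𝔚₁ = Ω'*𝔈`, `𝔚₂ = Ω*(Ω'*𝔈)`
    -- and `𝔚₃ = (Ω ×_ℋ Ω')*𝔈`, there is a canonical equivariant isometric isomorphism
    -- `𝔚₂ ≅ 𝔚₃`, natural in `𝔈`:
    (∀ (𝔈 : BanachSpaceFieldB.{u, v} Qb) (αK : SpaceAction 𝒦 𝔈)
       (𝔚₁ : BanachSpaceFieldB.{u, v} P) (αW₁ : SpaceAction ℋ 𝔚₁)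
       (D₁ : GraphPullbackData M' 𝔈 αK 𝔚₁ αW₁)
       (𝔚₂ : BanachSpaceFieldB.{u, v} O) (αW₂ : SpaceAction 𝒢 𝔚₂)
       (D₂ : GraphPullbackData M 𝔚₁ αW₁ 𝔚₂ αW₂)
       (𝔚₃ : BanachSpaceFieldB.{u, v} O) (αW₃ : SpaceAction 𝒢 𝔚₃)
       (DQ : GraphPullbackData MQ 𝔈 αK 𝔚₃ αW₃),
      ∃ iso : ∀ g : O, 𝔚₂.E g ≃ₗᵢ[ℂ] 𝔚₃.E g,
        -- `iso` identifies the components over `⟦(ω, ω')⟧` with the components over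
        -- `ω'` of the components over `ω`
        (∀ (g) (v : 𝔚₂.E g) (vq : {v : Ω × Ω' // M.right.σ v.1 = M'.left.ρ v.2})
           (hq : MQ.left.ρ (Quot.mk _ vq) = g),
          DQ.comp g (iso g v) (Quot.mk _ vq) hq
            = cast (congrArg 𝔈.E (hσQ vq).symm)
                (D₁.comp (M.right.σ vq.1.1)
                  (D₂.comp g v vq.1.1 ((hρQ vq).symm.trans hq)) vq.1.2 vq.2.symm)) ∧
        -- `iso` matches the section spaces
        (∀ ζ : ∀ g, 𝔚₂.E g, ζ ∈ 𝔚₂.F.Γ ↔ ((fun g => iso g (ζ g)) ∈ 𝔚₃.F.Γ)) ∧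
        -- `iso` is `𝒢`-equivariant
        (∀ γ v, iso (𝒢.r γ) (αW₂.act γ v) = αW₃.act γ (iso (𝒢.s γ) v))) ∧
    -- naturality in `𝔈`: the isomorphisms intertwine the images of morphisms under the
    -- two functors
    (∀ (𝔈 𝔉 : BanachSpaceFieldB.{u, v} Qb) (αKE : SpaceAction 𝒦 𝔈)
       (αKF : SpaceAction 𝒦 𝔉)
       (W1E W1F : BanachSpaceFieldB.{u, v} P) (aW1E : SpaceAction ℋ W1E)
       (aW1F : SpaceAction ℋ W1F)
       (D1E : GraphPullbackData M' 𝔈 αKE W1E aW1E)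
       (D1F : GraphPullbackData M' 𝔉 αKF W1F aW1F)
       (W2E W2F : BanachSpaceFieldB.{u, v} O) (aW2E : SpaceAction 𝒢 W2E)
       (aW2F : SpaceAction 𝒢 W2F)
       (D2E : GraphPullbackData M W1E aW1E W2E aW2E)
       (D2F : GraphPullbackData M W1F aW1F W2F aW2F)
       (W3E W3F : BanachSpaceFieldB.{u, v} O) (aW3E : SpaceAction 𝒢 W3E)
       (aW3F : SpaceAction 𝒢 W3F)
       (DQE : GraphPullbackData MQ 𝔈 αKE W3E aW3E)
       (DQF : GraphPullbackData MQ 𝔉 αKF W3F aW3F)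
       (T : ∀ q, 𝔈.E q →L[ℂ] 𝔉.E q) (hT : IsLinField 𝔈 𝔉 T)
       (hTe : IsEquivariantField αKE αKF T)
       (TW₁ : ∀ q, W1E.E q →L[ℂ] W1F.E q) (TW₂ : ∀ g, W2E.E g →L[ℂ] W2F.E g)
       (TW₃ : ∀ g, W3E.E g →L[ℂ] W3F.E g)
       (h₁ : IsGraphPullbackOp D1E D1F T TW₁)
       (h₂ : IsGraphPullbackOp D2E D2F TW₁ TW₂)
       (h₃ : IsGraphPullbackOp DQE DQF T TW₃)
       (isoE : ∀ g : O, W2E.E g ≃ₗᵢ[ℂ] W3E.E g)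
       (isoF : ∀ g : O, W2F.E g ≃ₗᵢ[ℂ] W3F.E g),
      (∀ (g) (v : W2E.E g) (vq : {v : Ω × Ω' // M.right.σ v.1 = M'.left.ρ v.2})
         (hq : MQ.left.ρ (Quot.mk _ vq) = g),
        DQE.comp g (isoE g v) (Quot.mk _ vq) hq
          = cast (congrArg 𝔈.E (hσQ vq).symm)
              (D1E.comp (M.right.σ vq.1.1)
                (D2E.comp g v vq.1.1 ((hρQ vq).symm.trans hq)) vq.1.2 vq.2.symm)) →
      (∀ (g) (v : W2F.E g) (vq : {v : Ω × Ω' // M.right.σ v.1 = M'.left.ρ v.2})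
         (hq : MQ.left.ρ (Quot.mk _ vq) = g),
        DQF.comp g (isoF g v) (Quot.mk _ vq) hq
          = cast (congrArg 𝔉.E (hσQ vq).symm)
              (D1F.comp (M.right.σ vq.1.1)
                (D2F.comp g v vq.1.1 ((hρQ vq).symm.trans hq)) vq.1.2 vq.2.symm)) →
      ∀ g v, isoF g (TW₂ g v) = TW₃ g (isoE g v)) := by
  constructor
  · -- existence of the natural isomorphism
    intro 𝔈 αK 𝔚₁ αW₁ D₁ 𝔚₂ αW₂ D₂ 𝔚₃ αW₃ DQ
    classical
    have hnorm : ∀ (g : O) (v : 𝔚₂.E g),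
        ‖isoFun D₁ D₂ DQ hρQ hσQ hactrQ g v‖ = ‖v‖ :=
      isoFun_norm D₁ D₂ DQ hρQ hσQ hactrQ hMQ.ρ_surj
    have hinj : ∀ (g : O), Function.Injective
        (isoFun D₁ D₂ DQ hρQ hσQ hactrQ g) := by
      intro g v w h
      have hsub : isoFun D₁ D₂ DQ hρQ hσQ hactrQ g (v - w)
          = isoFun D₁ D₂ DQ hρQ hσQ hactrQ g v
            - isoFun D₁ D₂ DQ hρQ hσQ hactrQ g w := by
        have h1 : v - w = v + (-1 : ℂ) • w := by
          rw [neg_one_smul, ← sub_eq_add_neg]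
        rw [h1, isoFun_add, isoFun_smul, neg_one_smul, ← sub_eq_add_neg]
      have h0 : ‖v - w‖ = 0 := by
        rw [← hnorm g (v - w), hsub, h, sub_self, norm_zero]
      have := norm_eq_zero.mp h0
      exact sub_eq_zero.mp this
    refine ⟨fun g => LinearIsometryEquiv.mk
      (LinearEquiv.ofBijective
        (LinearMap.mk (AddHom.mk (isoFun D₁ D₂ DQ hρQ hσQ hactrQ g)
          (isoFun_add D₁ D₂ DQ hρQ hσQ hactrQ g))
          (isoFun_smul D₁ D₂ DQ hρQ hσQ hactrQ g))
        ⟨hinj g, fun w => isoFun_surj D₁ D₂ DQ hρQ hσQ hactrQ g w⟩)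
      (hnorm g), ?_, ?_, ?_⟩
    · intro g v vq hq
      show DQ.comp g (isoFun D₁ D₂ DQ hρQ hσQ hactrQ g v) (Quot.mk _ vq) hq = _
      rw [isoFun_spec, eFam_mk]
      rfl
    · intro ζ
      exact isoFun_sections D₁ D₂ DQ hρQ hσQ hactrQ hℋ.1 hM' ζ
    · intro γ v
      exact isoFun_equivariant D₁ D₂ DQ hρQ hσQ hactrQ hactlQ hM γ v
  · -- naturality
    intro 𝔈 𝔉 αKE αKF W1E W1F aW1E aW1F D1E D1F W2E W2F aW2E aW2F D2E D2F
      W3E W3F aW3E aW3F DQE DQF T hT hTe TW₁ TW₂ TW₃ h₁ h₂ h₃ isoE isoF hE hF g v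
    apply DQF.comp_inj g
    intro q hq
    induction q using Quot.ind with | _ vq =>
    rw [hF g (TW₂ g v) vq hq,
      h₂ g v vq.1.1 ((hρQ vq).symm.trans hq),
      h₁ (M.right.σ vq.1.1) (D2E.comp g v vq.1.1 ((hρQ vq).symm.trans hq))
        vq.1.2 vq.2.symm,
      h₃ g (isoE g v) (Quot.mk _ vq) hq, hE g v vq hq]
    exact cast_map (fun q e => T q e) (hσQ vq).symm _

end Statement15
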